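/- arXiv:2502.07041 — 4 statements merged into one kernel-verified Lean document; each statement's English description precedes it below -/
import Mathlib

section
/- Let 1 < p < q < 2 and let q' = q/(q-1). There exists a constant C > 0 such that for every n ∈ ℕ and every finite family f_1, …, f_n ∈ Exp L^{q'} of measurable functions on [0,1], one has sup_{t>0} t · (#{k ∈ {1,…,n} : ‖f_k‖_{L^p[0,1]} > t})^{1/q} ≤ C · max_{ε ∈ {-1,1}^n} ‖Σ_{k=1}^n ε_k f_k‖_{Exp L^{q'}}. (That is, the inclusion Exp L^{q'} ⊂ L^p is (ℓ^{q,∞},1)-absolutely summing.) -/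
open MeasureTheory
open scoped ENNReal

/-- Lebesgue measure restricted to `[0,1]`. -/
noncomputable def mu01 : Measure ℝ := volume.restrict (Set.Icc 0 1)

/-- The weight `W_p(t) = (log(e/t))^{1-p}` for `t ∈ (0,1]`, `W_p(0)=0`. -/
noncomputable def Wp (p t : ℝ) : ℝ :=
  if t = 0 then 0 else Real.log (Real.exp 1 / t) ^ (1 - p)

/-- The norm of the Lorentz space `X_p` on `[0,1]`:
`‖f‖_{X_p} = (∫_0^∞ W_p(μ{s ∈ [0,1] : |f s|^p > λ}) dλ)^{1/p}`. -/
noncomputable def XpNorm (p : ℝ) (f : ℝ → ℝ) : ℝ≥0∞ :=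
  (∫⁻ lam in Set.Ioi (0 : ℝ),
      ENNReal.ofReal
        (Wp p (volume {s : ℝ | s ∈ Set.Icc (0 : ℝ) 1 ∧ lam < |f s| ^ p}).toReal)) ^ (1 / p)

/-- Luxemburg norm of the exponential Orlicz space `Exp L^α` on `[0,1]`. -/
noncomputable def expLNorm (α : ℝ) (f : ℝ → ℝ) : ℝ≥0∞ :=
  ⨅ (lam : ℝ) (_ : 0 < lam ∧
      ∫⁻ t, ENNReal.ofReal (Real.exp ((|f t| / lam) ^ α) - 1) ∂mu01 ≤ 1),
    ENNReal.ofReal lam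

/-- Weak `ℓ^q` quasinorm of a finite family of reals. -/
noncomputable def weakLq (q : ℝ) {n : ℕ} (a : Fin n → ℝ) : ℝ :=
  ⨆ t : Set.Ioi (0 : ℝ), t.1 * (Nat.card {k : Fin n // t.1 < |a k|} : ℝ) ^ (1 / q)

/-- Weak `ℓ^q` quasinorm of a sequence with values in `[0,∞]`, cardinalities
taken via the counting measure on `ℕ`. -/
noncomputable def weakLqSeq (q : ℝ) (a : ℕ → ℝ≥0∞) : ℝ≥0∞ :=
  ⨆ t : Set.Ioi (0 : ℝ),
    ENNReal.ofReal t.1 * Measure.count {k : ℕ | ENNReal.ofReal t.1 < a k} ^ (1 / q)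

/-- Peetre `K`-functional for the couple `(L^1[0,1], L^∞[0,1])`. -/
noncomputable def Kfun (τ : ℝ) (f : ℝ → ℝ) : ℝ≥0∞ :=
  ⨅ (g : ℝ → ℝ) (h : ℝ → ℝ) (_ : f = g + h),
    eLpNorm g 1 mu01 + ENNReal.ofReal τ * eLpNorm h ⊤ mu01

/-- The Rademacher functions `r_k(t) = sgn(sin(2^k π t))`. -/
noncomputable def rademacher (k : ℕ) (t : ℝ) : ℝ :=
  Real.sign (Real.sin (2 ^ k * Real.pi * t))

/-- Marcinkiewicz space norm `‖f‖_{M_φ} = sup_{0<t≤1} (φ(t)/t) K(t,f;L^1,L^∞)`. -/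
noncomputable def MNorm (φ : ℝ → ℝ) (f : ℝ → ℝ) : ℝ≥0∞ :=
  ⨆ t : {t : ℝ // 0 < t ∧ t ≤ 1}, ENNReal.ofReal (φ t.1 / t.1) * Kfun t.1 f

/-! Fix `λ` larger than the `Exp L^{q'}` norms of all signed sums `∑ ε_k f_k`; their `L^r` norms
are then `≲ λ r^{1/q'}`. For a set `A` of indices let `b_j(x)` be the `j`-th largest of the
`|f_k(x)|`, `k ∈ A`. Since `j b_j ≤ ∑_{k∈T} |f_k|` for some `T` with `|T| = j`, and a uniformly
random signing has `|∑ ε_k f_k| ≥ ∑_{k∈T} |f_k|` with probability at least `2^{-j}`, we get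
`j ‖b_j‖_r ≲ 2^{j/r} λ r^{1/q'}`; with `r = j + 1 ≥ p` this gives `‖b_j‖_p ≲ λ j^{-1/q}`.
If `A` is the set of `k` with `‖f_k‖_p > t`, then `|A| t^p ≤ ∑_j ‖b_j‖_p^p ≲ λ^p |A|^{1-p/q}`,
that is `t |A|^{1/q} ≲ λ`. -/

lemma involutive_update_neg {ι : Type*} [DecidableEq ι] (i : ι) :
    Function.Involutive fun ε : ι → ℤˣ => Function.update ε i (-ε i) := by
  intro ε
  simp

lemma abs_add_abs_le_max_abs_add_abs_sub (x y : ℝ) : |x| + |y| ≤ max |x + y| |x - y| := by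
  cases abs_cases x <;> cases abs_cases y <;> cases abs_cases (x + y) <;>
    cases abs_cases (x - y) <;> simp only [le_max_iff] <;> first | (left; linarith) | (right; linarith)

lemma abs_intUnits_cast (u : ℤˣ) : |((u : ℤ) : ℝ)| = 1 := by
  rcases Int.units_eq_one_or u with rfl | rfl <;> simp

section Signs

variable {ι : Type*} [Fintype ι]

/-- Signs `±1` are encoded as units of `ℤ`. -/
noncomputable def signedSum (ε : ι → ℤˣ) (a : ι → ℝ) : ℝ := ∑ k, ((ε k : ℤ) : ℝ) * a k

variable [DecidableEq ι]

lemma signedSum_eq_add_update (ε : ι → ℤˣ) (a : ι → ℝ) (i : ι) :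
    signedSum ε a = signedSum ε (Function.update a i 0) + (ε i : ℤ) * a i := by
  simp only [signedSum]
  rw [← Finset.add_sum_erase _ _ (Finset.mem_univ i),
    ← Finset.add_sum_erase _ _ (Finset.mem_univ i), Function.update_self, mul_zero, zero_add,
    add_comm]
  congr 1
  refine Finset.sum_congr rfl fun k hk => ?_
  rw [Function.update_of_ne (Finset.ne_of_mem_erase hk)]

lemma signedSum_update_update_zero (ε : ι → ℤˣ) (a : ι → ℝ) (i : ι) (u : ℤˣ) :
    signedSum (Function.update ε i u) (Function.update a i 0) =
      signedSum ε (Function.update a i 0) := by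
  refine Finset.sum_congr rfl fun k _ => ?_
  by_cases hk : k = i
  · subst hk; simp
  · simp [Function.update_of_ne hk]

lemma abs_signedSum_update_zero_add_abs_le (ε : ι → ℤˣ) (a : ι → ℝ) (i : ι) :
    |signedSum ε (Function.update a i 0)| + |a i| ≤
      max |signedSum ε a| |signedSum (Function.update ε i (-ε i)) a| := by
  have h := abs_add_abs_le_max_abs_add_abs_sub (signedSum ε (Function.update a i 0))
    ((ε i : ℤ) * a i)
  rw [abs_mul, abs_intUnits_cast, one_mul, ← signedSum_eq_add_update] at h
  rwa [signedSum_eq_add_update (Function.update ε i (-ε i)) a i, signedSum_update_update_zero,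
    Function.update_self, Units.val_neg, Int.cast_neg, neg_mul, ← sub_eq_add_neg]

theorem two_pow_card_mul_le_sum_signedSum (φ : ℝ → ℝ≥0∞) (hφ : Monotone φ) (a : ι → ℝ)
    (T : Finset ι) :
    2 ^ Fintype.card ι * φ (∑ k ∈ T, |a k|) ≤ 2 ^ T.card * ∑ ε : ι → ℤˣ, φ |signedSum ε a| := by
  induction T using Finset.induction_on generalizing φ a with
  | empty =>
    calc 2 ^ Fintype.card ι * φ (∑ k ∈ ∅, |a k|) = ∑ _ε : ι → ℤˣ, φ 0 := by
          simp [Fintype.card_units_int]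
      _ ≤ 2 ^ (∅ : Finset ι).card * ∑ ε : ι → ℤˣ, φ |signedSum ε a| := by
          rw [Finset.card_empty, pow_zero, one_mul]
          exact Finset.sum_le_sum fun ε _ => hφ (abs_nonneg _)
  | insert i T hi ih =>
    set a' := Function.update a i 0 with ha'
    have hsum : ∑ k ∈ insert i T, |a k| = ∑ k ∈ T, |a' k| + |a i| := by
      rw [Finset.sum_insert hi, add_comm]
      congr 1
      refine Finset.sum_congr rfl fun k hk => ?_
      rw [ha', Function.update_of_ne (ne_of_mem_of_not_mem hk hi)]
    have hpair : ∀ ε, φ (|signedSum ε a'| + |a i|) ≤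
        φ |signedSum ε a| + φ |signedSum (Function.update ε i (-ε i)) a| := fun ε =>
      (hφ (abs_signedSum_update_zero_add_abs_le ε a i)).trans
        (hφ.map_max.trans_le (max_le le_self_add le_add_self))
    have hflip : ∑ ε, φ |signedSum (Function.update ε i (-ε i)) a| = ∑ ε, φ |signedSum ε a| :=
      Equiv.sum_comp (involutive_update_neg i).toPerm fun ε => φ |signedSum ε a|
    calc 2 ^ Fintype.card ι * φ (∑ k ∈ insert i T, |a k|)
        ≤ 2 ^ T.card * ∑ ε : ι → ℤˣ, φ (|signedSum ε a'| + |a i|) := by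
          rw [hsum]
          exact ih (fun y => φ (y + |a i|)) (hφ.comp fun _ _ h => add_le_add_left h _) a'
      _ ≤ 2 ^ T.card * ∑ ε : ι → ℤˣ,
            (φ |signedSum ε a| + φ |signedSum (Function.update ε i (-ε i)) a|) := by
          gcongr with ε; exact hpair ε
      _ = 2 ^ (insert i T).card * ∑ ε : ι → ℤˣ, φ |signedSum ε a| := by
          rw [Finset.sum_add_distrib, hflip, Finset.card_insert_of_notMem hi, pow_succ]
          ring

end Signs

section OrderStatistics

variable {ι α : Type*} [LinearOrder α] [BoundedOrder α]

/-- Counted with multiplicity; `⊤` for `j = 0` and `⊥` for `j > #A`. -/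
def kthLargest (A : Finset ι) (w : ι → α) (j : ℕ) : α :=
  (A.powersetCard j).sup fun T => T.inf w

lemma exists_subset_card_eq_kthLargest_le (A : Finset ι) (w : ι → α) {j : ℕ}
    (hj : j ≤ A.card) : ∃ T ⊆ A, T.card = j ∧ ∀ k ∈ T, kthLargest A w j ≤ w k := by
  obtain ⟨T, hT, hsup⟩ := Finset.exists_mem_eq_sup _ (Finset.powersetCard_nonempty.2 hj)
    fun T => T.inf w
  rw [Finset.mem_powersetCard] at hT
  exact ⟨T, hT.1, hT.2, fun k hk => hsup.le.trans (Finset.inf_le hk)⟩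

lemma kthLargest_mono {A B : Finset ι} (hAB : A ⊆ B) (w : ι → α) (j : ℕ) :
    kthLargest A w j ≤ kthLargest B w j :=
  Finset.sup_mono (Finset.powersetCard_mono hAB)

lemma kthLargest_card (A : Finset ι) (w : ι → α) : kthLargest A w A.card = A.inf w := by
  rw [kthLargest, Finset.powersetCard_self, Finset.sup_singleton]

lemma sum_le_sum_kthLargest {β : Type*} [AddCommMonoid β] [PartialOrder β]
    [IsOrderedAddMonoid β] {φ : α → β} (hφ : Monotone φ) (A : Finset ι) (w : ι → α) :
    ∑ k ∈ A, φ (w k) ≤ ∑ j ∈ Finset.Icc 1 A.card, φ (kthLargest A w j) := by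
  classical
  obtain ⟨n, hn⟩ : ∃ n, A.card = n := ⟨_, rfl⟩
  induction n generalizing A with
  | zero => simp [Finset.card_eq_zero.1 hn]
  | succ n ih =>
    obtain ⟨i, hi, hmin⟩ := A.exists_min_image w (Finset.card_pos.1 (by omega))
    have hcard : (A.erase i).card = n := by rw [Finset.card_erase_of_mem hi, hn]; rfl
    rw [← Finset.add_sum_erase A _ hi, hn, Finset.sum_Icc_succ_top (by omega), add_comm]
    refine add_le_add ?_ (hφ ?_)
    · calc ∑ k ∈ A.erase i, φ (w k)
          ≤ ∑ j ∈ Finset.Icc 1 n, φ (kthLargest (A.erase i) w j) := hcard ▸ ih _ hcard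
        _ ≤ ∑ j ∈ Finset.Icc 1 n, φ (kthLargest A w j) :=
          Finset.sum_le_sum fun j _ => hφ (kthLargest_mono (Finset.erase_subset i A) w j)
    · rw [← hn, kthLargest_card]
      exact Finset.le_inf hmin

lemma measurable_kthLargest [MeasurableSpace α] [MeasurableSup₂ α] [MeasurableInf₂ α]
    {Ω : Type*} [MeasurableSpace Ω] {w : ι → Ω → α} (hw : ∀ k, Measurable (w k))
    (A : Finset ι) (j : ℕ) : Measurable fun x => kthLargest A (fun k => w k x) j := by
  have hfun : (fun x => kthLargest A (fun k => w k x) j) =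
      (A.powersetCard j).sup fun T => T.inf w := by
    ext x; simp only [kthLargest, Finset.sup_apply, Finset.inf_apply]
  rw [hfun]
  refine Finset.sup_induction (p := fun g : Ω → α => Measurable g) measurable_const
    (fun _ h₁ _ h₂ => h₁.sup h₂) fun T _ => ?_
  exact Finset.inf_induction (p := fun g : Ω → α => Measurable g) measurable_const
    (fun _ h₁ _ h₂ => h₁.inf h₂) fun k _ => hw k

end OrderStatistics

lemma two_pow_card_mul_kthLargest_rpow_le {ι : Type*} [Fintype ι] [DecidableEq ι]
    (A : Finset ι) {j : ℕ} (hj : j ≤ A.card) {r : ℝ} (hr : 0 ≤ r) (a : ι → ℝ) :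
    2 ^ Fintype.card ι * ((j : ℝ≥0∞) * kthLargest A (fun k => ‖a k‖ₑ) j) ^ r ≤
      2 ^ j * ∑ ε : ι → ℤˣ, ‖signedSum ε a‖ₑ ^ r := by
  obtain ⟨T, -, rfl, hT⟩ := exists_subset_card_eq_kthLargest_le A (fun k => ‖a k‖ₑ) hj
  have hsum : (T.card : ℝ≥0∞) * kthLargest A (fun k => ‖a k‖ₑ) T.card ≤
      ENNReal.ofReal (∑ k ∈ T, |a k|) := by
    rw [ENNReal.ofReal_sum_of_nonneg fun k _ => abs_nonneg _, ← nsmul_eq_mul, ← Finset.sum_const]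
    exact Finset.sum_le_sum fun k hk => (hT k hk).trans_eq (Real.enorm_eq_ofReal_abs _)
  have hφ : Monotone fun y : ℝ => ENNReal.ofReal y ^ r :=
    fun _ _ h => ENNReal.rpow_le_rpow (ENNReal.ofReal_le_ofReal h) hr
  have hsigns := two_pow_card_mul_le_sum_signedSum _ hφ a T
  simp only [← Real.enorm_eq_ofReal_abs] at hsigns
  calc _ ≤ 2 ^ Fintype.card ι * ENNReal.ofReal (∑ k ∈ T, |a k|) ^ r := by gcongr
    _ ≤ _ := hsigns

lemma rpow_le_rpow_self_mul_exp {x β : ℝ} (hx : 0 ≤ x) (hβ : 0 < β) :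
    x ^ β ≤ β ^ β * Real.exp x := by
  calc x ^ β = β ^ β * (x / β) ^ β := by
        rw [Real.div_rpow hx hβ.le, mul_div_cancel₀ _ (Real.rpow_pos_of_pos hβ β).ne']
    _ ≤ β ^ β * Real.exp (x / β - 1) ^ β := by
        gcongr; linarith [Real.add_one_le_exp (x / β - 1)]
    _ = β ^ β * Real.exp (x - β) := by
        rw [← Real.exp_mul, sub_mul, div_mul_cancel₀ _ hβ.ne', one_mul]
    _ ≤ β ^ β * Real.exp x := by gcongr; linarith

lemma rpow_le_rpow_mul_exp_rpow {y α r : ℝ} (hy : 0 ≤ y) (hα : 0 < α) (hr : 0 < r) :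
    y ^ r ≤ ((r / α) ^ (1 / α)) ^ r * Real.exp (y ^ α) := by
  have hrα : 0 < r / α := div_pos hr hα
  calc y ^ r = (y ^ α) ^ (r / α) := by rw [← Real.rpow_mul hy, mul_div_cancel₀ _ hα.ne']
    _ ≤ (r / α) ^ (r / α) * Real.exp (y ^ α) :=
        rpow_le_rpow_self_mul_exp (Real.rpow_nonneg hy α) hrα
    _ = ((r / α) ^ (1 / α)) ^ r * Real.exp (y ^ α) := by
        rw [← Real.rpow_mul hrα.le, one_div_mul_eq_div]

lemma add_one_div_rpow_inv_le {α j : ℝ} (hα : 1 ≤ α) (hj : 1 ≤ j) :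
    ((j + 1) / α) ^ (1 / α) ≤ 2 * j ^ (1 / α) := by
  have hα0 : 0 < α := by linarith
  calc ((j + 1) / α) ^ (1 / α) ≤ (2 * j) ^ (1 / α) := by
        gcongr; exact (div_le_self (by linarith) hα).trans (by linarith)
    _ = 2 ^ (1 / α) * j ^ (1 / α) := Real.mul_rpow zero_le_two (by linarith)
    _ ≤ 2 * j ^ (1 / α) := by
        gcongr
        exact Real.rpow_le_self_of_one_le one_le_two ((div_le_one hα0).2 hα)

lemma mul_rpow_sub_one_le_rpow_sub_rpow {x γ : ℝ} (hx : 1 ≤ x) (hγ0 : 0 ≤ γ) (hγ1 : γ ≤ 1) :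
    γ * x ^ (γ - 1) ≤ x ^ γ - (x - 1) ^ γ := by
  have hx0 : 0 < x := by linarith
  have hbern := rpow_one_add_le_one_add_mul_self (s := -(1 / x))
    (by rw [neg_le_neg_iff, div_le_one hx0]; exact hx) hγ0 hγ1
  have hsplit : (x - 1) ^ γ = x ^ γ * (1 + -(1 / x)) ^ γ := by
    rw [← Real.mul_rpow hx0.le (by rw [← sub_eq_add_neg, sub_nonneg, div_le_one hx0]; exact hx)]
    congr 1; field_simp; ring
  rw [hsplit, Real.rpow_sub_one hx0.ne']
  have := mul_le_mul_of_nonneg_left hbern (Real.rpow_nonneg hx0.le γ)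
  calc γ * (x ^ γ / x) = x ^ γ - x ^ γ * (1 + γ * -(1 / x)) := by field_simp; ring
    _ ≤ x ^ γ - x ^ γ * (1 + -(1 / x)) ^ γ := by linarith

lemma mul_sum_Icc_rpow_sub_one_le {γ : ℝ} (hγ0 : 0 ≤ γ) (hγ1 : γ ≤ 1) (m : ℕ) :
    γ * ∑ j ∈ Finset.Icc 1 m, (j : ℝ) ^ (γ - 1) ≤ (m : ℝ) ^ γ := by
  induction m with
  | zero => simpa using Real.rpow_nonneg le_rfl γ
  | succ m ih =>
    have := mul_rpow_sub_one_le_rpow_sub_rpow (x := m + 1) (by simp) hγ0 hγ1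
    rw [Finset.sum_Icc_succ_top (by omega), mul_add]
    push_cast
    rw [add_sub_cancel_right] at this
    linarith

lemma mul_rpow_one_div_le_of_mul_rpow_le {t m C p q : ℝ} (ht : 0 ≤ t) (hm : 0 ≤ m) (hC : 0 ≤ C)
    (hp : 0 < p) (hq : q ≠ 0) (h : m * t ^ p ≤ C ^ p * m ^ (1 - p / q)) :
    t * m ^ (1 / q) ≤ C := by
  rcases hm.eq_or_lt with rfl | hm
  · rw [Real.zero_rpow (one_div_ne_zero hq), mul_zero]; exact hC
  have hmpq : 0 < m ^ (p / q) := by positivity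
  rw [Real.rpow_sub hm, Real.rpow_one, mul_div_assoc', le_div_iff₀ hmpq, mul_assoc,
    mul_comm (C ^ p)] at h
  rw [← Real.rpow_le_rpow_iff (by positivity) hC hp, Real.mul_rpow ht (by positivity),
    ← Real.rpow_mul hm.le, one_div_mul_eq_div]
  exact le_of_mul_le_mul_left h hm

section Moments

variable {Ω : Type*} [MeasurableSpace Ω] {μ : Measure Ω}

lemma lintegral_enorm_rpow_le_of_lintegral_exp_le {g : Ω → ℝ} {α lam r : ℝ} (hα : 0 < α)
    (hlam : 0 < lam) (hr : 0 < r)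
    (h : ∫⁻ x, ENNReal.ofReal (Real.exp ((|g x| / lam) ^ α)) ∂μ ≤ 2) :
    ∫⁻ x, ‖g x‖ₑ ^ r ∂μ ≤ 2 * ENNReal.ofReal (lam * (r / α) ^ (1 / α)) ^ r := by
  set K := lam * (r / α) ^ (1 / α)
  have hpoint : ∀ x,
      ‖g x‖ₑ ^ r ≤ ENNReal.ofReal K ^ r * ENNReal.ofReal (Real.exp ((|g x| / lam) ^ α)) := by
    intro x
    have hy : 0 ≤ |g x| / lam := by positivity
    rw [Real.enorm_eq_ofReal_abs, ENNReal.ofReal_rpow_of_nonneg (abs_nonneg _) hr.le,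
      ENNReal.ofReal_rpow_of_nonneg (by positivity) hr.le, ← ENNReal.ofReal_mul (by positivity)]
    refine ENNReal.ofReal_le_ofReal ?_
    calc |g x| ^ r = lam ^ r * (|g x| / lam) ^ r := by
          rw [Real.div_rpow (abs_nonneg _) hlam.le, mul_div_cancel₀ _ (by positivity)]
      _ ≤ lam ^ r * (((r / α) ^ (1 / α)) ^ r * Real.exp ((|g x| / lam) ^ α)) := by
          gcongr; exact rpow_le_rpow_mul_exp_rpow hy hα hr
      _ = K ^ r * Real.exp ((|g x| / lam) ^ α) := by
          rw [Real.mul_rpow hlam.le (by positivity)]; ring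
  calc ∫⁻ x, ‖g x‖ₑ ^ r ∂μ
      ≤ ∫⁻ x, ENNReal.ofReal K ^ r * ENNReal.ofReal (Real.exp ((|g x| / lam) ^ α)) ∂μ :=
        lintegral_mono hpoint
    _ = ENNReal.ofReal K ^ r * ∫⁻ x, ENNReal.ofReal (Real.exp ((|g x| / lam) ^ α)) ∂μ :=
        lintegral_const_mul' _ _ (ENNReal.rpow_ne_top_of_nonneg hr.le ENNReal.ofReal_ne_top)
    _ ≤ ENNReal.ofReal K ^ r * 2 := by gcongr
    _ = 2 * ENNReal.ofReal K ^ r := mul_comm _ _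

variable {ι : Type*} [Fintype ι] {f : ι → Ω → ℝ}

lemma measurable_signedSum (hf : ∀ k, Measurable (f k)) (ε : ι → ℤˣ) :
    Measurable fun x => signedSum ε fun k => f k x :=
  Finset.measurable_sum _ fun k _ => (hf k).const_mul _

variable [DecidableEq ι]

lemma rpow_mul_lintegral_kthLargest_le (hf : ∀ k, Measurable (f k)) (A : Finset ι) {j : ℕ}
    (hj : j ≤ A.card) {r : ℝ} (hr : 0 ≤ r) {M : ℝ≥0∞}
    (hM : ∀ ε : ι → ℤˣ, ∫⁻ x, ‖signedSum ε fun k => f k x‖ₑ ^ r ∂μ ≤ M) :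
    (j : ℝ≥0∞) ^ r * ∫⁻ x, kthLargest A (fun k => ‖f k x‖ₑ) j ^ r ∂μ ≤ 2 ^ j * M := by
  have hmeas : ∀ ε : ι → ℤˣ, Measurable fun x => ‖signedSum ε fun k => f k x‖ₑ ^ r :=
    fun ε => (measurable_signedSum hf ε).enorm.pow_const r
  have hcard : (∑ _ε : ι → ℤˣ, M) = 2 ^ Fintype.card ι * M := by
    simp [Fintype.card_units_int]
  refine (ENNReal.mul_le_mul_iff_right (a := 2 ^ Fintype.card ι) (by positivity) (by simp)).1 ?_
  calc 2 ^ Fintype.card ι * ((j : ℝ≥0∞) ^ r * ∫⁻ x, kthLargest A (fun k => ‖f k x‖ₑ) j ^ r ∂μ)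
      = ∫⁻ x, 2 ^ Fintype.card ι * ((j : ℝ≥0∞) * kthLargest A (fun k => ‖f k x‖ₑ) j) ^ r ∂μ := by
        simp_rw [ENNReal.mul_rpow_of_nonneg _ _ hr]
        rw [lintegral_const_mul' _ _ (by simp), lintegral_const_mul' _ _ (by simp [hr])]
    _ ≤ ∫⁻ x, 2 ^ j * ∑ ε : ι → ℤˣ, ‖signedSum ε fun k => f k x‖ₑ ^ r ∂μ :=
        lintegral_mono fun x => two_pow_card_mul_kthLargest_rpow_le A hj hr _
    _ = 2 ^ j * ∑ ε : ι → ℤˣ, ∫⁻ x, ‖signedSum ε fun k => f k x‖ₑ ^ r ∂μ := by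
        rw [lintegral_const_mul' _ _ (by simp), lintegral_finsetSum _ fun ε _ => hmeas ε]
    _ ≤ 2 ^ j * ∑ _ε : ι → ℤˣ, M := by gcongr with ε; exact hM ε
    _ = 2 ^ Fintype.card ι * (2 ^ j * M) := by rw [hcard]; ring

lemma eLpNorm'_kthLargest_le [IsProbabilityMeasure μ] (hf : ∀ k, Measurable (f k))
    (A : Finset ι) {j : ℕ} (hj1 : 1 ≤ j) (hj : j ≤ A.card) {p q lam : ℝ} (hp : 0 < p)
    (hp2 : p ≤ 2) (hq : 1 < q) (hlam : 0 < lam)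
    (hexp : ∀ ε : ι → ℤˣ, ∫⁻ x, ENNReal.ofReal
      (Real.exp ((|signedSum ε fun k => f k x| / lam) ^ (q / (q - 1)))) ∂μ ≤ 2) :
    eLpNorm' (fun x => kthLargest A (fun k => ‖f k x‖ₑ) j) p μ ≤
      ENNReal.ofReal (4 * lam * (j : ℝ) ^ (-(1 / q))) := by
  set α := q / (q - 1)
  have hα : 1 ≤ α := by rw [le_div_iff₀ (by linarith)]; linarith
  have hαq : 1 / α - 1 = -(1 / q) := by simp only [α]; field_simp; ring
  set r : ℝ := ((j + 1 : ℕ) : ℝ)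
  have hr : 0 < r := by positivity
  have hjR : (1 : ℝ) ≤ j := by exact_mod_cast hj1
  set K := lam * (r / α) ^ (1 / α)
  set b := fun x => kthLargest A (fun k => ‖f k x‖ₑ) j
  have hmom := rpow_mul_lintegral_kthLargest_le (μ := μ) hf A hj hr.le
    fun ε => lintegral_enorm_rpow_le_of_lintegral_exp_le (by positivity) hlam hr (hexp ε)
  have hj0 : (j : ℝ≥0∞) ^ r ≠ 0 := by positivity
  have hjtop : (j : ℝ≥0∞) ^ r ≠ ⊤ := by simp [hr.le]
  have hbr : eLpNorm' b r μ ≤ ENNReal.ofReal (2 * K / j) := by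
    rw [← ENNReal.rpow_le_rpow_iff hr, ← lintegral_rpow_enorm_eq_rpow_eLpNorm' hr]
    refine (ENNReal.mul_le_mul_iff_right hj0 hjtop).1 (hmom.trans_eq ?_)
    rw [← ENNReal.mul_rpow_of_nonneg _ _ hr.le, ← ENNReal.ofReal_natCast,
      ← ENNReal.ofReal_mul (by positivity), mul_div_cancel₀ _ (by positivity),
      ENNReal.ofReal_mul zero_le_two, ENNReal.mul_rpow_of_nonneg _ _ hr.le, ← mul_assoc,
      ← pow_succ, ENNReal.ofReal_ofNat, ← ENNReal.rpow_natCast]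
  have hK : 2 * K / j ≤ 4 * lam * (j : ℝ) ^ (-(1 / q)) := by
    rw [← hαq, Real.rpow_sub_one (by positivity), div_le_iff₀ (by positivity)]
    calc 2 * K = 2 * lam * ((j + 1) / α) ^ (1 / α) := by simp only [K, r]; push_cast; ring
      _ ≤ 2 * lam * (2 * j ^ (1 / α)) := by gcongr; exact add_one_div_rpow_inv_le hα hjR
      _ = 4 * lam * (j ^ (1 / α) / j) * j := by field_simp; ring
  calc eLpNorm' b p μ ≤ eLpNorm' b r μ :=
        eLpNorm'_le_eLpNorm'_of_exponent_le hp (hp2.trans (by simp [r]; linarith)) μ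
          (measurable_kthLargest (fun k => (hf k).enorm) A j).aestronglyMeasurable
    _ ≤ ENNReal.ofReal (2 * K / j) := hbr
    _ ≤ ENNReal.ofReal (4 * lam * (j : ℝ) ^ (-(1 / q))) := ENNReal.ofReal_le_ofReal hK

end Moments

section WeakType

variable {Ω : Type*} [MeasurableSpace Ω] {μ : Measure Ω}

lemma sum_eLpNorm'_rpow_le_sum_eLpNorm'_kthLargest_rpow {ι : Type*} {f : ι → Ω → ℝ}
    (hf : ∀ k, Measurable (f k)) (A : Finset ι) {p : ℝ} (hp : 0 < p) :
    ∑ k ∈ A, eLpNorm' (f k) p μ ^ p ≤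
      ∑ j ∈ Finset.Icc 1 A.card,
        eLpNorm' (fun x => kthLargest A (fun k => ‖f k x‖ₑ) j) p μ ^ p := by
  simp_rw [← lintegral_rpow_enorm_eq_rpow_eLpNorm' hp, enorm_eq_self]
  rw [← lintegral_finsetSum _ fun k _ => (hf k).enorm.pow_const p,
    ← lintegral_finsetSum _ fun j _ =>
      (measurable_kthLargest (fun k => (hf k).enorm) A j).pow_const p]
  exact lintegral_mono fun x =>
    sum_le_sum_kthLargest (fun _ _ h => ENNReal.rpow_le_rpow h hp.le) A _

lemma card_mul_rpow_le_sum_rpow [IsProbabilityMeasure μ] {ι : Type*} [Fintype ι] [DecidableEq ι]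
    {f : ι → Ω → ℝ} (hf : ∀ k, Measurable (f k)) (A : Finset ι) {p q lam t : ℝ} (ht : 0 ≤ t)
    (hp : 0 < p) (hp2 : p ≤ 2) (hq : 1 < q) (hlam : 0 < lam)
    (hexp : ∀ ε : ι → ℤˣ, ∫⁻ x, ENNReal.ofReal
      (Real.exp ((|signedSum ε fun k => f k x| / lam) ^ (q / (q - 1)))) ∂μ ≤ 2)
    (hA : ∀ k ∈ A, ENNReal.ofReal t ≤ eLpNorm' (f k) p μ) :
    (A.card : ℝ) * t ^ p ≤ ∑ j ∈ Finset.Icc 1 A.card, (4 * lam * (j : ℝ) ^ (-(1 / q))) ^ p := by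
  have hmass : (A.card : ℝ≥0∞) * ENNReal.ofReal t ^ p ≤
      ∑ j ∈ Finset.Icc 1 A.card, ENNReal.ofReal ((4 * lam * (j : ℝ) ^ (-(1 / q))) ^ p) :=
    calc (A.card : ℝ≥0∞) * ENNReal.ofReal t ^ p = ∑ k ∈ A, ENNReal.ofReal t ^ p := by
          rw [Finset.sum_const, nsmul_eq_mul]
      _ ≤ ∑ k ∈ A, eLpNorm' (f k) p μ ^ p := by gcongr with k hk; exact hA k hk
      _ ≤ ∑ j ∈ Finset.Icc 1 A.card,
            eLpNorm' (fun x => kthLargest A (fun k => ‖f k x‖ₑ) j) p μ ^ p :=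
          sum_eLpNorm'_rpow_le_sum_eLpNorm'_kthLargest_rpow hf A hp
      _ ≤ ∑ j ∈ Finset.Icc 1 A.card, ENNReal.ofReal (4 * lam * (j : ℝ) ^ (-(1 / q))) ^ p := by
          gcongr with j hj
          rw [Finset.mem_Icc] at hj
          exact eLpNorm'_kthLargest_le hf A hj.1 hj.2 hp hp2 hq hlam hexp
      _ = _ := Finset.sum_congr rfl fun j _ => ENNReal.ofReal_rpow_of_nonneg (by positivity) hp.le
  rwa [ENNReal.ofReal_rpow_of_nonneg ht hp.le, ← ENNReal.ofReal_natCast,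
    ← ENNReal.ofReal_mul (by positivity),
    ← ENNReal.ofReal_sum_of_nonneg fun j _ => by positivity,
    ENNReal.ofReal_le_ofReal_iff (by positivity)] at hmass

lemma sum_Icc_rpow_le {c p q : ℝ} (hc : 0 ≤ c) (hp : 0 < p) (hpq : p < q) (m : ℕ) :
    ∑ j ∈ Finset.Icc 1 m, (c * (j : ℝ) ^ (-(1 / q))) ^ p ≤
      (c * (q / (q - p)) ^ (1 / p)) ^ p * (m : ℝ) ^ (1 - p / q) := by
  have hq : 0 < q := hp.trans hpq
  have hγ : 0 < 1 - p / q := by rw [sub_pos, div_lt_one hq]; exact hpq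
  have hsum := mul_sum_Icc_rpow_sub_one_le hγ.le (by linarith [div_pos hp hq]) m
  calc ∑ j ∈ Finset.Icc 1 m, (c * (j : ℝ) ^ (-(1 / q))) ^ p
      = c ^ p * ∑ j ∈ Finset.Icc 1 m, (j : ℝ) ^ (1 - p / q - 1) := by
        rw [Finset.mul_sum]
        refine Finset.sum_congr rfl fun j _ => ?_
        rw [Real.mul_rpow hc (by positivity), ← Real.rpow_mul (by positivity)]
        ring_nf
    _ ≤ c ^ p * ((m : ℝ) ^ (1 - p / q) / (1 - p / q)) := by
        gcongr
        rw [le_div_iff₀ hγ]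
        linarith
    _ = (c * (q / (q - p)) ^ (1 / p)) ^ p * (m : ℝ) ^ (1 - p / q) := by
        rw [Real.mul_rpow (x := c) hc (by have := sub_pos.2 hpq; positivity),
          ← Real.rpow_mul (by have := sub_pos.2 hpq; positivity), one_div_mul_cancel hp.ne',
          Real.rpow_one]
        field_simp

theorem weakLq_eLpNorm_le [IsProbabilityMeasure μ] {n : ℕ} {f : Fin n → Ω → ℝ}
    (hf : ∀ k, Measurable (f k)) {p q lam : ℝ} (hp : 0 < p) (hp2 : p ≤ 2) (hpq : p < q)
    (hq : 1 < q) (hlam : 0 < lam)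
    (hexp : ∀ ε : Fin n → ℤˣ, ∫⁻ x, ENNReal.ofReal
      (Real.exp ((|signedSum ε fun k => f k x| / lam) ^ (q / (q - 1)))) ∂μ ≤ 2) :
    weakLq q (fun k => (eLpNorm (f k) (ENNReal.ofReal p) μ).toReal) ≤
      4 * lam * (q / (q - p)) ^ (1 / p) := by
  have hqp : 0 < q - p := sub_pos.2 hpq
  refine Real.iSup_le (fun ⟨t, ht⟩ => ?_) (by positivity)
  rw [Nat.card_eq_fintype_card, Fintype.card_subtype]
  set A := Finset.univ.filter fun k => t < |(eLpNorm (f k) (ENNReal.ofReal p) μ).toReal|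
  have hA : ∀ k ∈ A, ENNReal.ofReal t ≤ eLpNorm' (f k) p μ := fun k hk => by
    rw [← ENNReal.toReal_ofReal hp.le, ← eLpNorm_eq_eLpNorm' (by simpa) ENNReal.ofReal_ne_top]
    exact ENNReal.ofReal_le_of_le_toReal
      ((Finset.mem_filter.1 hk).2.le.trans_eq (abs_of_nonneg ENNReal.toReal_nonneg))
  refine mul_rpow_one_div_le_of_mul_rpow_le (le_of_lt ht) (Nat.cast_nonneg _) (by positivity)
    hp (by linarith) ?_
  exact (card_mul_rpow_le_sum_rpow hf A (le_of_lt ht) hp hp2 hq hlam hexp hA).trans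
    (sum_Icc_rpow_le (by positivity) hp hpq A.card)

end WeakType

instance : IsProbabilityMeasure mu01 :=
  ⟨by rw [mu01, Measure.restrict_apply_univ, Real.volume_Icc]; norm_num⟩

lemma lintegral_exp_le_two_of_expLNorm_lt {α lam : ℝ} {g : ℝ → ℝ} (hα : 0 ≤ α) (hlam : 0 < lam)
    (h : expLNorm α g < ENNReal.ofReal lam) :
    ∫⁻ t, ENNReal.ofReal (Real.exp ((|g t| / lam) ^ α)) ∂mu01 ≤ 2 := by
  obtain ⟨lam₀, h⟩ := iInf_lt_iff.1 h
  obtain ⟨⟨hlam₀, hmod₀⟩, hlt⟩ := iInf_lt_iff.1 h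
  have hle : lam₀ ≤ lam := ((ENNReal.ofReal_lt_ofReal_iff hlam).1 hlt).le
  have hmod : ∫⁻ t, ENNReal.ofReal (Real.exp ((|g t| / lam) ^ α) - 1) ∂mu01 ≤ 1 := by
    refine (lintegral_mono fun t => ENNReal.ofReal_le_ofReal ?_).trans hmod₀
    gcongr
  calc ∫⁻ t, ENNReal.ofReal (Real.exp ((|g t| / lam) ^ α)) ∂mu01
      ≤ ∫⁻ t, (ENNReal.ofReal (Real.exp ((|g t| / lam) ^ α) - 1) + 1) ∂mu01 := by
        refine lintegral_mono fun t => ?_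
        simpa using ENNReal.ofReal_add_le (p := Real.exp ((|g t| / lam) ^ α) - 1) (q := 1)
    _ = ∫⁻ t, ENNReal.ofReal (Real.exp ((|g t| / lam) ^ α) - 1) ∂mu01 + 1 := by
        rw [lintegral_add_right _ measurable_const, lintegral_one, measure_univ]
    _ ≤ 2 := by
        rw [← one_add_one_eq_two]; gcongr

lemma ofReal_le_ofReal_mul_of_forall_lt {w C : ℝ} {S : ℝ≥0∞} (hC : 0 < C)
    (h : ∀ lam : ℝ, 0 < lam → S < ENNReal.ofReal lam → w ≤ C * lam) :
    ENNReal.ofReal w ≤ ENNReal.ofReal C * S := by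
  rcases eq_or_ne S ⊤ with rfl | hS
  · simp [ENNReal.mul_top, hC]
  rw [← ENNReal.ofReal_toReal hS, ← ENNReal.ofReal_mul hC.le]
  refine ENNReal.ofReal_le_ofReal (le_of_forall_pos_le_add fun δ hδ => ?_)
  have hδC : 0 < δ / C := div_pos hδ hC
  calc w ≤ C * (S.toReal + δ / C) :=
        h _ (by positivity) ((ENNReal.lt_ofReal_iff_toReal_lt hS).2 (by linarith))
    _ = C * S.toReal + δ := by field_simp

/-- Theorem: for `1 < p < q < 2` and `q' = q/(q-1)`, the inclusion
`Exp L^{q'} ⊂ L^p` is `(ℓ^{q,∞},1)`-absolutely summing. -/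
theorem expL_subset_Lp_weak_lq_summing (p q : ℝ) (hp : 1 < p) (hpq : p < q) (hq : q < 2) :
    ∃ C : ℝ, 0 < C ∧ ∀ (n : ℕ) (f : Fin n → ℝ → ℝ),
      (∀ k, Measurable (f k)) → (∀ k, expLNorm (q / (q - 1)) (f k) ≠ ⊤) →
      ENNReal.ofReal
          (weakLq q fun k => (eLpNorm (f k) (ENNReal.ofReal p) mu01).toReal) ≤
        ENNReal.ofReal C *
          ⨆ ε : Fin n → ({-1, 1} : Set ℝ),
            expLNorm (q / (q - 1)) (fun s => ∑ k, (ε k : ℝ) * f k s) := by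
  have hq1 : 1 < q := hp.trans hpq
  have hqp : 0 < q - p := sub_pos.2 hpq
  refine ⟨4 * (q / (q - p)) ^ (1 / p), by positivity, fun n f hf _ => ?_⟩
  refine ofReal_le_ofReal_mul_of_forall_lt (by positivity) fun lam hlam hS => ?_
  have hexp : ∀ ε : Fin n → ℤˣ, ∫⁻ x, ENNReal.ofReal
      (Real.exp ((|signedSum ε fun k => f k x| / lam) ^ (q / (q - 1)))) ∂mu01 ≤ 2 := by
    intro ε
    let ε' : Fin n → ({-1, 1} : Set ℝ) := fun k =>
      ⟨(ε k : ℤ), by rcases Int.units_eq_one_or (ε k) with h | h <;> simp [h]⟩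
    refine lintegral_exp_le_two_of_expLNorm_lt (by positivity) hlam (lt_of_le_of_lt ?_ hS)
    exact le_iSup (fun ε : Fin n → ({-1, 1} : Set ℝ) =>
      expLNorm (q / (q - 1)) fun s => ∑ k, (ε k : ℝ) * f k s) ε'
  calc _ ≤ 4 * lam * (q / (q - p)) ^ (1 / p) :=
        weakLq_eLpNorm_le hf (by linarith) (by linarith) hpq hq1 hlam hexp
    _ = _ := by ring
end

section
/- Let 1 < p < 2 and α > 0. There exists a constant C > 0 such that for every measurable function f on [0,1]², (∫_0^1 ‖f(t, ·)‖_{Exp L^α}^p dt)^{1/p} ≤ C · esssup_{t ∈ [0,1]} ‖f(·, t)‖_{Exp L^α}. (That is, the transposition operator 𝒯 f(s,t) = f(t,s) is bounded from L^∞(Exp L^α) to L^p(Exp L^α) on [0,1]².) -/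
open MeasureTheory
open scoped ENNReal

open Real in
lemma aux_exp_ineq {x r B : ℝ} (hx : 0 ≤ x) (hr : 1 ≤ r) (hB : 1 ≤ B) :
    Real.exp (x / r) - 1 ≤ ((1 + B) ^ (1/r) - 1) + 2 * B ^ (1/r - 1) * (Real.exp x - 1) := by
  have hr0 : (0:ℝ) < r := lt_of_lt_of_le one_pos hr
  have h1r : (0:ℝ) < 1/r := by positivity
  have hB0 : (0:ℝ) < B := lt_of_lt_of_le one_pos hB
  have hex : (Real.exp x) ^ (1/r) = Real.exp (x / r) := by
    rw [Real.rpow_def_of_pos (Real.exp_pos x), Real.log_exp, mul_one_div]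
  have hw0 : 0 ≤ Real.exp x - 1 := by
    have := Real.one_le_exp hx; linarith
  have hc2 : 0 ≤ 2 * B ^ (1/r - 1) * (Real.exp x - 1) := by positivity
  rcases le_or_gt (Real.exp x) (1 + B) with h | h
  · have : Real.exp (x/r) ≤ (1 + B) ^ (1/r) := by
      rw [← hex]
      exact Real.rpow_le_rpow (Real.exp_pos x).le h h1r.le
    linarith
  · have hw1 : (1:ℝ) ≤ Real.exp x - 1 := by linarith
    set w := Real.exp x - 1 with hwdef
    have hwB : B < w := by simp only [hwdef]; linarith
    have hw0' : (0:ℝ) < w := by linarith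
    have step1 : Real.exp (x/r) ≤ (2*w) ^ (1/r) := by
      rw [← hex]
      exact Real.rpow_le_rpow (Real.exp_pos x).le (by simp only [hwdef]; linarith) h1r.le
    have step2 : (2*w) ^ (1/r) = 2 ^ (1/r) * w ^ (1/r) :=
      Real.mul_rpow (by norm_num) hw0'.le
    have step3 : (2:ℝ) ^ (1/r) ≤ 2 := by
      calc (2:ℝ) ^ (1/r) ≤ 2 ^ (1:ℝ) :=
            Real.rpow_le_rpow_of_exponent_le (by norm_num) ((div_le_one hr0).mpr hr)
        _ = 2 := Real.rpow_one 2
    have step4 : w ^ (1/r) = w ^ (1/r - 1) * w := by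
      rw [← Real.rpow_add_one hw0'.ne' (1/r - 1)]
      norm_num
    have step5 : w ^ (1/r - 1) ≤ B ^ (1/r - 1) := by
      refine Real.rpow_le_rpow_of_nonpos hB0 hwB.le ?_
      have : 1/r ≤ 1 := (div_le_one hr0).mpr hr
      linarith
    have hrw : (0:ℝ) ≤ w ^ (1/r) := Real.rpow_nonneg hw0'.le _
    have key : Real.exp (x/r) ≤ 2 * B ^ (1/r - 1) * w := by
      calc Real.exp (x/r) ≤ 2 ^ (1/r) * w ^ (1/r) := by rw [← step2]; exact step1
        _ ≤ 2 * w ^ (1/r) := by nlinarith [hrw]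
        _ = 2 * (w ^ (1/r - 1) * w) := by rw [step4]
        _ ≤ 2 * (B ^ (1/r - 1) * w) := by nlinarith [hw0'.le, step5]
        _ = 2 * B ^ (1/r - 1) * w := by ring
    have hc1 : (0:ℝ) ≤ (1 + B) ^ (1/r) - 1 := by
      have : (1:ℝ) ≤ (1+B) ^ (1/r) := Real.one_le_rpow (by linarith) h1r.le
      linarith
    have : Real.exp (x/r) - 1 ≤ 2 * B ^ (1/r - 1) * w := by linarith
    simp only [hwdef] at this ⊢
    linarith

lemma exp_quarter_le : Real.exp (1/4 : ℝ) ≤ 4/3 := by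
  have h := Real.add_one_le_exp (-(1/4) : ℝ)
  have hmul : Real.exp (1/4 : ℝ) * Real.exp (-(1/4) : ℝ) = 1 := by
    rw [← Real.exp_add]; norm_num
  nlinarith [Real.exp_pos (1/4 : ℝ), Real.exp_pos (-(1/4) : ℝ)]

lemma numeric_ineq {A : ℝ} (hA : 0 ≤ A) :
    ((1 + 8*(1+A)) ^ (1/(32*(1+Real.log (1+A)))) - 1)
      + 2 * (8*(1+A)) ^ (1/(32*(1+Real.log (1+A))) - 1) * A ≤ 1 := by
  have hL : 0 ≤ Real.log (1+A) := Real.log_nonneg (by linarith)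
  set L := Real.log (1+A) with hLdef
  set r := 32*(1+L) with hrdef
  have hr32 : (32:ℝ) ≤ r := by nlinarith
  have hr0 : (0:ℝ) < r := by linarith
  have hbound : ∀ b : ℝ, 0 < b → b ≤ 9*(1+A) → b ^ (1/r) ≤ 4/3 := by
    intro b hb hb9
    have h9 : (0:ℝ) < 9*(1+A) := by nlinarith
    have h1 : b ^ (1/r) ≤ (9*(1+A)) ^ (1/r) := Real.rpow_le_rpow hb.le hb9 (by positivity)
    have h2 : (9*(1+A)) ^ (1/r) = Real.exp (Real.log (9*(1+A)) * (1/r)) :=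
      Real.rpow_def_of_pos h9 _
    have h3 : Real.log (9*(1+A)) = Real.log 9 + L := by
      rw [Real.log_mul (by norm_num) (by linarith), hLdef]
    have h4 : Real.log 9 ≤ 8 := by
      have := Real.log_le_sub_one_of_pos (show (0:ℝ) < 9 by norm_num); linarith
    have h5 : Real.log (9*(1+A)) * (1/r) ≤ 1/4 := by
      rw [h3]
      have hnum : Real.log 9 + L ≤ 8 + L := by linarith
      have hkey : (8 + L) * (1/r) ≤ 1/4 := by
        rw [mul_one_div, div_le_div_iff₀ hr0 (by norm_num : (0:ℝ) < 4)]
        nlinarith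
      have hrpos : (0:ℝ) < 1/r := by positivity
      nlinarith
    calc b ^ (1/r) ≤ Real.exp (Real.log (9*(1+A)) * (1/r)) := h2 ▸ h1
      _ ≤ Real.exp (1/4 : ℝ) := Real.exp_le_exp.mpr h5
      _ ≤ 4/3 := exp_quarter_le
  have hB0 : (0:ℝ) < 8*(1+A) := by nlinarith
  have term1 : (1 + 8*(1+A)) ^ (1/r) - 1 ≤ 1/3 := by
    have := hbound (1 + 8*(1+A)) (by linarith) (by linarith)
    linarith
  have term2 : 2 * (8*(1+A)) ^ (1/r - 1) * A ≤ 1/3 := by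
    have hsub : (8*(1+A)) ^ (1/r - 1) = (8*(1+A)) ^ (1/r) / (8*(1+A)) := by
      rw [Real.rpow_sub hB0, Real.rpow_one]
    have hb : (8*(1+A)) ^ (1/r) ≤ 4/3 := hbound _ hB0 (by linarith)
    have hbnn : (0:ℝ) ≤ (8*(1+A)) ^ (1/r) := Real.rpow_nonneg hB0.le _
    rw [hsub]
    have hfrac : A / (8*(1+A)) ≤ 1/8 := by
      rw [div_le_div_iff₀ hB0 (by norm_num : (0:ℝ) < 8)]; linarith
    have hfracnn : 0 ≤ A / (8*(1+A)) := by positivity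
    have heq : 2 * ((8*(1+A)) ^ (1/r) / (8*(1+A))) * A
        = 2 * ((8*(1+A)) ^ (1/r) * (A / (8*(1+A)))) := by ring
    rw [heq]
    calc 2 * ((8*(1+A)) ^ (1/r) * (A / (8*(1+A))))
        ≤ 2 * ((4/3) * (1/8)) := by nlinarith
      _ = 1/3 := by norm_num
  linarith

lemma log_poly {q A : ℝ} (hq : 0 < q) (hA : 0 ≤ A) :
    (1 + Real.log (1+A)) ^ q ≤ (1+q) ^ q * (1+A) := by
  have h1A : (1:ℝ) ≤ 1 + A := by linarith
  set y := (1+A) ^ (1/q) with hydef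
  have hy1 : (1:ℝ) ≤ y := Real.one_le_rpow h1A (by positivity)
  have hy0 : (0:ℝ) < y := by linarith
  have hlog : Real.log (1+A) = q * Real.log y := by
    rw [hydef, Real.log_rpow (by linarith)]; field_simp
  have h2 : Real.log y ≤ y - 1 := Real.log_le_sub_one_of_pos hy0
  have h3 : 1 + Real.log (1+A) ≤ (1+q) * y := by
    rw [hlog]; nlinarith
  have h4 : (1 + Real.log (1+A)) ^ q ≤ ((1+q) * y) ^ q := by
    refine Real.rpow_le_rpow ?_ h3 hq.le
    have := Real.log_nonneg h1A; linarith
  have h5 : ((1+q) * y) ^ q = (1+q) ^ q * y ^ q := Real.mul_rpow (by linarith) hy0.le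
  have h6 : y ^ q = 1 + A := by
    rw [hydef, ← Real.rpow_mul (by linarith), one_div_mul_cancel hq.ne', Real.rpow_one]
  calc (1 + Real.log (1+A)) ^ q ≤ (1+q) ^ q * y ^ q := h4.trans_eq h5
    _ = (1+q) ^ q * (1+A) := by rw [h6]


lemma mu01_univ : mu01 Set.univ = 1 := by
  rw [mu01, Measure.restrict_apply_univ, Real.volume_Icc]; norm_num

instance : IsFiniteMeasure mu01 := by
  constructor; rw [mu01_univ]; exact ENNReal.one_lt_top

lemma expLNorm_le {α : ℝ} {g : ℝ → ℝ} {Λ : ℝ} (hΛ : 0 < Λ)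
    (h : ∫⁻ t, ENNReal.ofReal (Real.exp ((|g t| / Λ) ^ α) - 1) ∂mu01 ≤ 1) :
    expLNorm α g ≤ ENNReal.ofReal Λ :=
  iInf₂_le Λ ⟨hΛ, h⟩

lemma integral_le_of_lt {α : ℝ} (hα : 0 < α) {g : ℝ → ℝ} {lam0 : ℝ} (hlam0 : 0 < lam0)
    (h : expLNorm α g < ENNReal.ofReal lam0) :
    ∫⁻ t, ENNReal.ofReal (Real.exp ((|g t| / lam0) ^ α) - 1) ∂mu01 ≤ 1 := by
  rw [expLNorm, iInf_lt_iff] at h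
  obtain ⟨lam, h⟩ := h
  rw [iInf_lt_iff] at h
  obtain ⟨⟨hlam, hint⟩, hlt⟩ := h
  have hlamle : lam ≤ lam0 := by
    by_contra hc
    push_neg at hc
    exact absurd hlt (not_lt.mpr (ENNReal.ofReal_le_ofReal hc.le))
  refine le_trans (lintegral_mono fun t => ?_) hint
  apply ENNReal.ofReal_le_ofReal
  have hdiv : |g t| / lam0 ≤ |g t| / lam :=
    div_le_div_of_nonneg_left (abs_nonneg _) hlam hlamle
  have hpow : (|g t| / lam0) ^ α ≤ (|g t| / lam) ^ α :=
    Real.rpow_le_rpow (by positivity) hdiv hα.le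
  have := Real.exp_le_exp.mpr hpow
  linarith
lemma core_bound (p α : ℝ) (hp : 0 < p) (hα : 0 < α) (f : ℝ → ℝ → ℝ)
    (hf : Measurable (Function.uncurry f)) (lam0 : ℝ) (hlam0 : 0 < lam0)
    (hcol : ∀ᵐ t ∂mu01, expLNorm α (fun s => f s t) < ENNReal.ofReal lam0) :
    (∫⁻ t, expLNorm α (fun s => f t s) ^ p ∂mu01) ^ (1/p) ≤
      ENNReal.ofReal lam0 *
        ENNReal.ofReal ((2 * ((32:ℝ) ^ (p/α) * (1 + p/α) ^ (p/α))) ^ (1/p)) := by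
  set H : ℝ → ℝ → ℝ≥0∞ :=
    fun t s => ENNReal.ofReal (Real.exp ((|f t s| / lam0) ^ α) - 1) with hHdef
  have hfm : Measurable fun z : ℝ × ℝ => f z.1 z.2 := hf
  have hHmeas : Measurable (Function.uncurry H) := by
    apply ENNReal.measurable_ofReal.comp
    apply Measurable.sub _ measurable_const
    apply Real.measurable_exp.comp
    exact (Real.continuous_rpow_const hα.le).measurable.comp ((hfm.abs).div_const lam0)
  have hGmeas : Measurable fun t => ∫⁻ s, H t s ∂mu01 :=
    hHmeas.lintegral_prod_right'
  set G : ℝ → ℝ≥0∞ := fun t => ∫⁻ s, H t s ∂mu01 with hGdef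
  have hGint : ∫⁻ t, G t ∂mu01 ≤ 1 := by
    have hswap : ∫⁻ t, ∫⁻ s, H t s ∂mu01 ∂mu01 = ∫⁻ s, ∫⁻ t, H t s ∂mu01 ∂mu01 :=
      lintegral_lintegral_swap hHmeas.aemeasurable
    rw [hGdef]
    rw [hswap]
    have hae : ∀ᵐ s ∂mu01, ∫⁻ t, H t s ∂mu01 ≤ 1 := by
      filter_upwards [hcol] with s hs
      exact integral_le_of_lt hα hlam0 hs
    calc ∫⁻ s, ∫⁻ t, H t s ∂mu01 ∂mu01 ≤ ∫⁻ _, 1 ∂mu01 := lintegral_mono_ae hae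
      _ = 1 := by rw [lintegral_one, mu01_univ]
  have hGfin : ∀ᵐ t ∂mu01, G t < ⊤ :=
    ae_lt_top hGmeas (lt_of_le_of_lt hGint ENNReal.one_lt_top).ne
  -- row estimate
  have hrow : ∀ᵐ t ∂mu01, expLNorm α (fun s => f t s) ≤
      ENNReal.ofReal (lam0 * (32*(1+Real.log (1+(G t).toReal))) ^ (1/α)) := by
    filter_upwards [hGfin] with t hGt
    set A := (G t).toReal with hAdef
    have hA : 0 ≤ A := ENNReal.toReal_nonneg
    have hLpos : 0 ≤ Real.log (1+A) := Real.log_nonneg (by linarith)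
    set r := 32*(1+Real.log (1+A)) with hrdef
    have hr1 : (1:ℝ) ≤ r := by nlinarith
    have hr0 : (0:ℝ) < r := by linarith
    set B := 8*(1+A) with hBdef
    have hB1 : (1:ℝ) ≤ B := by nlinarith
    have hB0 : (0:ℝ) < B := by linarith
    have hc1 : (0:ℝ) ≤ (1+B) ^ (1/r) - 1 := by
      have : (1:ℝ) ≤ (1+B) ^ (1/r) := Real.one_le_rpow (by linarith) (by positivity)
      linarith
    have hc2 : (0:ℝ) ≤ 2 * B ^ (1/r - 1) := by positivity
    apply expLNorm_le (by positivity)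
    have hexp_eq : ∀ s : ℝ, (|f t s| / (lam0 * r ^ (1/α))) ^ α = ((|f t s|/lam0) ^ α) / r := by
      intro s
      rw [show |f t s| / (lam0 * r ^ (1/α)) = (|f t s|/lam0) / (r ^ (1/α)) by
        rw [div_div]]
      rw [Real.div_rpow (by positivity) (by positivity)]
      congr 1
      rw [← Real.rpow_mul hr0.le, one_div_mul_cancel hα.ne', Real.rpow_one]
    have hpt : ∀ s : ℝ, ENNReal.ofReal (Real.exp ((|f t s| / (lam0 * r ^ (1/α))) ^ α) - 1)
        ≤ ENNReal.ofReal ((1+B) ^ (1/r) - 1)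
          + ENNReal.ofReal (2 * B ^ (1/r - 1)) * H t s := by
      intro s
      rw [hexp_eq s]
      have hx : 0 ≤ (|f t s|/lam0) ^ α := Real.rpow_nonneg (by positivity) _
      have hineq := aux_exp_ineq hx hr1 hB1
      have hw0 : 0 ≤ Real.exp ((|f t s|/lam0) ^ α) - 1 := by
        have := Real.one_le_exp hx; linarith
      calc ENNReal.ofReal (Real.exp (((|f t s|/lam0) ^ α) / r) - 1)
          ≤ ENNReal.ofReal (((1+B) ^ (1/r) - 1)
              + 2 * B ^ (1/r - 1) * (Real.exp ((|f t s|/lam0) ^ α) - 1)) :=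
            ENNReal.ofReal_le_ofReal hineq
        _ = ENNReal.ofReal ((1+B) ^ (1/r) - 1)
              + ENNReal.ofReal (2 * B ^ (1/r - 1) * (Real.exp ((|f t s|/lam0) ^ α) - 1)) :=
            ENNReal.ofReal_add hc1 (mul_nonneg hc2 hw0)
        _ = ENNReal.ofReal ((1+B) ^ (1/r) - 1)
              + ENNReal.ofReal (2 * B ^ (1/r - 1)) * H t s := by
            rw [ENNReal.ofReal_mul hc2]
    have hHtmeas : Measurable fun s => H t s :=
      (Measurable.of_uncurry_left hHmeas)
    calc ∫⁻ s, ENNReal.ofReal (Real.exp ((|f t s| / (lam0 * r ^ (1/α))) ^ α) - 1) ∂mu01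
        ≤ ∫⁻ s, (ENNReal.ofReal ((1+B) ^ (1/r) - 1)
            + ENNReal.ofReal (2 * B ^ (1/r - 1)) * H t s) ∂mu01 :=
          lintegral_mono fun s => hpt s
      _ = ENNReal.ofReal ((1+B) ^ (1/r) - 1) * mu01 Set.univ
            + ENNReal.ofReal (2 * B ^ (1/r - 1)) * G t := by
          rw [lintegral_add_left measurable_const, lintegral_const,
            lintegral_const_mul _ hHtmeas]
      _ = ENNReal.ofReal ((1+B) ^ (1/r) - 1)
            + ENNReal.ofReal (2 * B ^ (1/r - 1)) * ENNReal.ofReal A := by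
          rw [mu01_univ, mul_one, hAdef, ENNReal.ofReal_toReal hGt.ne]
      _ = ENNReal.ofReal (((1+B) ^ (1/r) - 1) + 2 * B ^ (1/r - 1) * A) := by
          rw [← ENNReal.ofReal_mul hc2, ← ENNReal.ofReal_add hc1 (mul_nonneg hc2 hA)]
      _ ≤ 1 := by
          rw [← ENNReal.ofReal_one]
          exact ENNReal.ofReal_le_ofReal (by
            have := numeric_ineq hA
            simpa [hBdef, hrdef] using this)
  -- integrate the row estimate
  set q := p/α with hqdef
  have hq : 0 < q := div_pos hp hα
  set K := (32:ℝ) ^ q * (1+q) ^ q with hKdef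
  have hK0 : 0 < K := by positivity
  have hmaj : ∀ᵐ t ∂mu01, expLNorm α (fun s => f t s) ^ p ≤
      ENNReal.ofReal (lam0 ^ p * K) * (1 + ENNReal.ofReal (G t).toReal) := by
    filter_upwards [hrow] with t ht
    set A := (G t).toReal with hAdef
    have hA : 0 ≤ A := ENNReal.toReal_nonneg
    have hLpos : 0 ≤ Real.log (1+A) := Real.log_nonneg (by linarith)
    set r := 32*(1+Real.log (1+A)) with hrdef
    have hr0 : (0:ℝ) < r := by nlinarith
    have hreal : (lam0 * r ^ (1/α)) ^ p ≤ lam0 ^ p * K * (1+A) := by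
      rw [Real.mul_rpow hlam0.le (by positivity)]
      have h1 : (r ^ (1/α)) ^ p = r ^ q := by
        rw [← Real.rpow_mul hr0.le]
        congr 1
        rw [hqdef]; ring
      have h2 : r ^ q ≤ K * (1+A) := by
        rw [hrdef, Real.mul_rpow (by norm_num) (by linarith), hKdef]
        have := log_poly hq hA
        calc (32:ℝ) ^ q * (1+Real.log (1+A)) ^ q
            ≤ (32:ℝ) ^ q * ((1+q) ^ q * (1+A)) := by
              have h32 : (0:ℝ) ≤ (32:ℝ) ^ q := Real.rpow_nonneg (by norm_num) _
              nlinarith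
          _ = (32:ℝ) ^ q * (1+q) ^ q * (1+A) := by ring
      calc lam0 ^ p * (r ^ (1/α)) ^ p = lam0 ^ p * r ^ q := by rw [h1]
        _ ≤ lam0 ^ p * (K * (1+A)) := by
            have hl : (0:ℝ) ≤ lam0 ^ p := Real.rpow_nonneg hlam0.le _
            nlinarith
        _ = lam0 ^ p * K * (1+A) := by ring
    calc expLNorm α (fun s => f t s) ^ p
        ≤ (ENNReal.ofReal (lam0 * r ^ (1/α))) ^ p := ENNReal.rpow_le_rpow ht hp.le
      _ = ENNReal.ofReal ((lam0 * r ^ (1/α)) ^ p) :=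
          ENNReal.ofReal_rpow_of_pos (by positivity)
      _ ≤ ENNReal.ofReal (lam0 ^ p * K * (1+A)) := ENNReal.ofReal_le_ofReal hreal
      _ = ENNReal.ofReal (lam0 ^ p * K) * ENNReal.ofReal (1+A) := by
          rw [← ENNReal.ofReal_mul (by positivity)]
      _ = ENNReal.ofReal (lam0 ^ p * K) * (1 + ENNReal.ofReal A) := by
          rw [ENNReal.ofReal_add one_pos.le hA, ENNReal.ofReal_one]
  have hmeas2 : Measurable fun t => (1 : ℝ≥0∞) + ENNReal.ofReal (G t).toReal :=
    measurable_const.add (ENNReal.measurable_ofReal.comp (ENNReal.measurable_toReal.comp hGmeas))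
  have hmain : ∫⁻ t, expLNorm α (fun s => f t s) ^ p ∂mu01 ≤
      ENNReal.ofReal (lam0 ^ p * K) * 2 := by
    calc ∫⁻ t, expLNorm α (fun s => f t s) ^ p ∂mu01
        ≤ ∫⁻ t, ENNReal.ofReal (lam0 ^ p * K) * (1 + ENNReal.ofReal (G t).toReal) ∂mu01 :=
          lintegral_mono_ae hmaj
      _ = ENNReal.ofReal (lam0 ^ p * K) * ∫⁻ t, (1 + ENNReal.ofReal (G t).toReal) ∂mu01 :=
          lintegral_const_mul _ hmeas2
      _ ≤ ENNReal.ofReal (lam0 ^ p * K) * 2 := by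
          gcongr
          calc ∫⁻ t, (1 + ENNReal.ofReal (G t).toReal) ∂mu01
              = mu01 Set.univ + ∫⁻ t, ENNReal.ofReal (G t).toReal ∂mu01 := by
                rw [lintegral_add_left measurable_const, lintegral_one]
            _ ≤ 1 + 1 := by
                rw [mu01_univ]
                gcongr
                exact le_trans (lintegral_mono fun t => ENNReal.ofReal_toReal_le) hGint
            _ = 2 := one_add_one_eq_two
  calc (∫⁻ t, expLNorm α (fun s => f t s) ^ p ∂mu01) ^ (1/p)
      ≤ (ENNReal.ofReal (lam0 ^ p * K) * 2) ^ (1/p) :=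
        ENNReal.rpow_le_rpow hmain (by positivity)
    _ = (ENNReal.ofReal (lam0 ^ p * K * 2)) ^ (1/p) := by
        rw [show (2:ℝ≥0∞) = ENNReal.ofReal 2 by norm_num,
          ← ENNReal.ofReal_mul (by positivity)]
    _ = ENNReal.ofReal ((lam0 ^ p * K * 2) ^ (1/p)) :=
        ENNReal.ofReal_rpow_of_pos (by positivity)
    _ = ENNReal.ofReal (lam0 * (2*K) ^ (1/p)) := by
        congr 1
        rw [show lam0 ^ p * K * 2 = lam0 ^ p * (2*K) by ring,
          Real.mul_rpow (Real.rpow_nonneg hlam0.le _) (by positivity),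
          ← Real.rpow_mul hlam0.le, mul_one_div_cancel hp.ne', Real.rpow_one]
    _ = ENNReal.ofReal lam0 * ENNReal.ofReal ((2*K) ^ (1/p)) :=
        ENNReal.ofReal_mul hlam0.le

/-- Lemma: for `1 < p < 2` and `α > 0`, the transposition operator is bounded
from `L^∞(Exp L^α)` to `L^p(Exp L^α)` on `[0,1]²`. -/
theorem transposition_bounded_Linfty_to_Lp (p α : ℝ) (hp : 1 < p) (hp2 : p < 2) (hα : 0 < α) :
    ∃ C : ℝ, 0 < C ∧ ∀ f : ℝ → ℝ → ℝ, Measurable (Function.uncurry f) →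
      (∫⁻ t, expLNorm α (fun s => f t s) ^ p ∂mu01) ^ (1 / p) ≤
        ENNReal.ofReal C * essSup (fun t => expLNorm α (fun s => f s t)) mu01 := by
  have hp0 : (0:ℝ) < p := lt_trans one_pos hp
  set C0 : ℝ := (2 * ((32:ℝ) ^ (p/α) * (1 + p/α) ^ (p/α))) ^ (1/p) with hC0def
  have hq : 0 < p/α := div_pos hp0 hα
  have hC0 : 0 < C0 := by
    rw [hC0def]; positivity
  refine ⟨2 * C0, by positivity, fun f hf => ?_⟩
  set M := essSup (fun t => expLNorm α (fun s => f s t)) mu01 with hMdef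
  have hMa : ∀ᵐ t ∂mu01, expLNorm α (fun s => f s t) ≤ M :=
    ENNReal.ae_le_essSup _
  by_cases hMtop : M = ⊤
  · rw [hMtop, ENNReal.mul_top (ENNReal.ofReal_pos.mpr (by positivity)).ne']
    exact le_top
  by_cases hM0 : M = 0
  · have hsmall : ∀ ε : ℝ, 0 < ε →
        (∫⁻ t, expLNorm α (fun s => f t s) ^ p ∂mu01) ^ (1 / p) ≤
          ENNReal.ofReal ε * ENNReal.ofReal C0 := by
      intro ε hε
      refine core_bound p α hp0 hα f hf ε hε ?_
      filter_upwards [hMa] with t ht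
      exact lt_of_le_of_lt (ht.trans_eq hM0) (ENNReal.ofReal_pos.mpr hε)
    have hzero : (∫⁻ t, expLNorm α (fun s => f t s) ^ p ∂mu01) ^ (1 / p) ≤ 0 := by
      refine ENNReal.le_of_forall_pos_le_add fun δ hδ _ => ?_
      have hδ' : (0:ℝ) < (δ:ℝ) / (C0 + 1) := by positivity
      refine le_trans (hsmall _ hδ') ?_
      rw [← ENNReal.ofReal_mul (by positivity), zero_add]
      calc ENNReal.ofReal ((δ:ℝ) / (C0+1) * C0) ≤ ENNReal.ofReal (δ:ℝ) := by
            apply ENNReal.ofReal_le_ofReal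
            rw [div_mul_eq_mul_div, div_le_iff₀ (by positivity)]
            nlinarith [δ.coe_nonneg]
        _ = (δ : ℝ≥0∞) := ENNReal.ofReal_coe_nnreal
    rw [hM0, mul_zero]
    exact hzero
  · have hMpos : 0 < M := pos_iff_ne_zero.mpr hM0
    have htR : 0 < M.toReal := ENNReal.toReal_pos hM0 hMtop
    have hcol : ∀ᵐ t ∂mu01,
        expLNorm α (fun s => f s t) < ENNReal.ofReal (2 * M.toReal) := by
      filter_upwards [hMa] with t ht
      refine lt_of_le_of_lt ht ?_
      have h2M : ENNReal.ofReal (2 * M.toReal) = 2 * M := by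
        rw [ENNReal.ofReal_mul (by norm_num), ENNReal.ofReal_toReal hMtop,
          ENNReal.ofReal_ofNat]
      rw [h2M, two_mul]
      exact ENNReal.lt_add_right hMtop hM0
    have := core_bound p α hp0 hα f hf (2 * M.toReal) (by positivity) hcol
    refine le_trans this ?_
    rw [← ENNReal.ofReal_mul (by positivity)]
    rw [show 2 * M.toReal * C0 = 2 * C0 * M.toReal by ring,
      ENNReal.ofReal_mul (by positivity), ENNReal.ofReal_toReal hMtop]
end

section
/- Let 1 < p < 2. For every constant C > 0 there exists a measurable function f on [0,1]² such that ‖f(·, t)‖_{X_p} ≤ 1 for almost every t ∈ [0,1], while ∫_0^1 ‖f(t, ·)‖_{X_p} dt > C. (That is, the transposition operator 𝒯 f(s,t) = f(t,s) is NOT bounded from L^∞(X_p) to L^1(X_p) on [0,1]².) -/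
open MeasureTheory
open scoped ENNReal

/-!
Split `[0,1)` into the dyadic blocks `[1 - 2⁻ᵏ, 1 - 2⁻ᵏ⁻¹)`. For `t` in the `k`-th block the
column `f(·, t)` is `2^{k(p-1)/p}` times the indicator of an interval of length `exp(1 - 2^k)`;
since `W_p(exp(1 - 2^k)) = 2^{k(1-p)}`, every column has `X_p` norm at most `1`. The centre of that
interval sweeps across `[-2, 2)` as `t` crosses the block, so every row `f(s, ·)`, `s ∈ [0,1]`,
equals `2^{k(p-1)/p}` on an interval of length `exp(1 - 2^k) / 2^{k+3}` inside the `k`-th block.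
Hence for levels `λ` between `2^{k(p-1)}` and `2^{(k+1)(p-1)}` the weight of the level set is at
least `2^{(k+3)(1-p)}`, each such range of levels contributes the same positive amount to
`‖f(s, ·)‖_{X_p}^p`, and every row has infinite norm.
-/

open Set Real

section Weight

variable {p : ℝ}

lemma Wp_zero : Wp p 0 = 0 := if_pos rfl

lemma Wp_exp_one_sub (B : ℝ) : Wp p (exp (1 - B)) = B ^ (1 - p) := by
  rw [Wp, if_neg (exp_pos _).ne', ← exp_sub, log_exp, sub_sub_cancel]

lemma one_le_log_exp_one_div {x : ℝ} (hx : 0 < x) (hx1 : x ≤ 1) : 1 ≤ log (exp 1 / x) := by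
  rw [log_div (exp_pos 1).ne' hx.ne', log_exp]
  linarith [log_nonpos hx.le hx1]

lemma Wp_nonneg {x : ℝ} (hx : x ∈ Icc (0 : ℝ) 1) : 0 ≤ Wp p x := by
  rcases hx.1.eq_or_lt with rfl | hx0
  · exact Wp_zero.ge
  · rw [Wp, if_neg hx0.ne']
    exact rpow_nonneg (zero_le_one.trans (one_le_log_exp_one_div hx0 hx.2)) _

lemma Wp_monotoneOn (hp : 1 ≤ p) : MonotoneOn (Wp p) (Icc 0 1) := by
  intro x hx y hy hxy
  rcases hx.1.eq_or_lt with rfl | hx0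
  · rw [Wp_zero]
    exact Wp_nonneg hy
  have hy0 := hx0.trans_le hxy
  rw [Wp, Wp, if_neg hx0.ne', if_neg hy0.ne']
  refine rpow_le_rpow_of_nonpos (zero_lt_one.trans_le (one_le_log_exp_one_div hy0 hy.2)) ?_
    (by linarith)
  exact log_le_log (div_pos (exp_pos 1) hy0) (div_le_div_of_nonneg_left (exp_pos 1).le hx0 hxy)

end Weight

noncomputable def XpLayer (p : ℝ) (f : ℝ → ℝ) (lam : ℝ) : ℝ≥0∞ :=
  ENNReal.ofReal (Wp p (volume {s : ℝ | s ∈ Icc (0 : ℝ) 1 ∧ lam < |f s| ^ p}).toReal)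

lemma XpNorm_eq_XpLayer (p : ℝ) (f : ℝ → ℝ) :
    XpNorm p f = (∫⁻ lam in Ioi 0, XpLayer p f lam) ^ (1 / p) := rfl

lemma XpNorm_indicator_const {p : ℝ} (hp : 0 < p) (E : Set ℝ) {M : ℝ} (hM : 0 ≤ M) :
    XpNorm p (E.indicator fun _ => M) =
      ENNReal.ofReal (M ^ p * Wp p (volume (Icc 0 1 ∩ E)).toReal) ^ (1 / p) := by
  have hlayer : ∀ lam ∈ Ioi (0 : ℝ), XpLayer p (E.indicator fun _ => M) lam =
      (Iio (M ^ p)).indicator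
        (fun _ => ENNReal.ofReal (Wp p (volume (Icc 0 1 ∩ E)).toReal)) lam := by
    intro lam (hlam : 0 < lam)
    have hlevel : {s | s ∈ Icc (0 : ℝ) 1 ∧ lam < |E.indicator (fun _ => M) s| ^ p} =
        {s | s ∈ Icc 0 1 ∩ E ∧ lam < M ^ p} := by
      ext s
      by_cases hs : s ∈ E <;> simp [hs, abs_of_nonneg hM, zero_rpow hp.ne', hlam.le]
    rw [XpLayer, hlevel]
    by_cases hlt : lam < M ^ p
    · simp only [hlt, and_true, ofPred_mem_eq, mem_Iio, indicator_of_mem]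
    · simp [hlt, Wp_zero]
  rw [XpNorm_eq_XpLayer, setLIntegral_congr_fun measurableSet_Ioi hlayer,
    lintegral_indicator measurableSet_Iio, setLIntegral_const,
    Measure.restrict_apply measurableSet_Iio,
    Iio_inter_Ioi, Real.volume_Ioo, sub_zero, mul_comm, ← ENNReal.ofReal_mul (by positivity)]

lemma rpow_one_sub_le_XpLayer {p : ℝ} (hp : 1 ≤ p) {f : ℝ → ℝ} {lam : ℝ} {A : Set ℝ}
    (hA : A ⊆ Icc 0 1) (hAf : ∀ s ∈ A, lam < |f s| ^ p) {B : ℝ}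
    (hB : ENNReal.ofReal (exp (1 - B)) ≤ volume A) :
    ENNReal.ofReal (B ^ (1 - p)) ≤ XpLayer p f lam := by
  set L := {s : ℝ | s ∈ Icc (0 : ℝ) 1 ∧ lam < |f s| ^ p}
  have hAL : A ⊆ L := fun s hs => ⟨hA hs, hAf s hs⟩
  have hL1 : volume L ≤ 1 := (measure_mono fun s hs => hs.1).trans_eq (by simp)
  have hexp : exp (1 - B) ≤ (volume L).toReal :=
    (ENNReal.ofReal_le_iff_le_toReal (ne_top_of_le_ne_top ENNReal.one_ne_top hL1)).1
      (hB.trans (measure_mono hAL))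
  have hL1' : (volume L).toReal ≤ 1 :=
    ENNReal.toReal_le_of_le_ofReal zero_le_one (ENNReal.ofReal_one ▸ hL1)
  rw [XpLayer, ← Wp_exp_one_sub]
  refine ENNReal.ofReal_le_ofReal (Wp_monotoneOn hp ⟨(exp_pos _).le, ?_⟩
    ⟨ENNReal.toReal_nonneg, ?_⟩ hexp)
  · exact hexp.trans hL1'
  · exact hL1'

lemma setLIntegral_eq_top_of_le_Ioo {μ : Measure ℝ} {a : ℕ → ℝ} (ha : Monotone a) {s : Set ℝ}
    (hs : ∀ k, Ioo (a k) (a (k + 1)) ⊆ s) {g : ℝ → ℝ≥0∞} {c : ℝ≥0∞} (hc : c ≠ 0)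
    (hg : ∀ k, c ≤ ∫⁻ x in Ioo (a k) (a (k + 1)), g x ∂μ) :
    ∫⁻ x in s, g x ∂μ = ⊤ :=
  eq_top_iff.2 <| calc
    ⊤ = ∑' _ : ℕ, c := (ENNReal.tsum_const_eq_top_of_ne_zero hc).symm
    _ ≤ ∑' k, ∫⁻ x in Ioo (a k) (a (k + 1)), g x ∂μ := ENNReal.tsum_le_tsum hg
    _ = ∫⁻ x in ⋃ k, Ioo (a k) (a (k + 1)), g x ∂μ :=
      (lintegral_iUnion (fun _ => measurableSet_Ioo) ha.pairwise_disjoint_on_Ioo_succ g).symm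
    _ ≤ ∫⁻ x in s, g x ∂μ := lintegral_mono_set (iUnion_subset hs)

noncomputable def blockIndex (t : ℝ) : ℕ := Nat.log 2 ⌊(1 - t)⁻¹⌋₊

lemma blockIndex_eq {t : ℝ} {k : ℕ} (h₁ : (2 : ℝ) ^ k ≤ (1 - t)⁻¹) (h₂ : (1 - t)⁻¹ < 2 ^ (k + 1)) :
    blockIndex t = k :=
  Nat.log_eq_of_pow_le_of_lt_pow (Nat.le_floor (by exact_mod_cast h₁))
    ((Nat.floor_lt ((pow_pos two_pos k).le.trans h₁)).2 (by exact_mod_cast h₂))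

noncomputable def stripHeight (p : ℝ) (k : ℕ) : ℝ := ((2 : ℝ) ^ k) ^ ((p - 1) / p)

noncomputable def stripHalfWidth (k : ℕ) : ℝ := exp (1 - 2 ^ k) / 2

noncomputable def stripCentre (t : ℝ) : ℝ := 6 - 2 ^ (blockIndex t + 3) * (1 - t)

noncomputable def transpositionExample (p s t : ℝ) : ℝ :=
  (Metric.ball (stripCentre t) (stripHalfWidth (blockIndex t))).indicator
    (fun _ => stripHeight p (blockIndex t)) s

lemma stripHeight_nonneg (p : ℝ) (k : ℕ) : 0 ≤ stripHeight p k := by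
  unfold stripHeight; positivity

lemma stripHeight_rpow {p : ℝ} (hp : p ≠ 0) (k : ℕ) :
    stripHeight p k ^ p = ((2 : ℝ) ^ k) ^ (p - 1) := by
  rw [stripHeight, ← rpow_mul (by positivity), div_mul_cancel₀ _ hp]

lemma measurable_transpositionExample (p : ℝ) :
    Measurable (Function.uncurry (transpositionExample p)) := by
  have hblock : Measurable blockIndex := (measurable_from_top (f := Nat.log 2)).comp
    (Nat.measurable_floor.comp (measurable_const.sub measurable_id).inv)
  have hk : Measurable fun x : ℝ × ℝ => blockIndex x.2 := hblock.comp measurable_snd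
  have hball : MeasurableSet
      {x : ℝ × ℝ | x.1 ∈ Metric.ball (stripCentre x.2) (stripHalfWidth (blockIndex x.2))} := by
    simp only [Metric.mem_ball, Real.dist_eq, stripCentre]
    exact measurableSet_lt (by fun_prop) ((measurable_from_top (f := stripHalfWidth)).comp hk)
  exact Measurable.ite hball ((measurable_from_top (f := stripHeight p)).comp hk) measurable_const

lemma exp_one_sub_two_pow_le_one (k : ℕ) : exp (1 - 2 ^ k) ≤ 1 :=
  exp_le_one_iff.2 (by linarith [one_le_pow₀ (M₀ := ℝ) one_le_two (n := k)])

lemma XpNorm_column_le_one {p : ℝ} (hp : 1 < p) (t : ℝ) :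
    XpNorm p (fun s => transpositionExample p s t) ≤ 1 := by
  set k := blockIndex t
  set ε := exp (1 - 2 ^ k)
  have hε : ε ∈ Icc 0 1 := ⟨(exp_pos _).le, exp_one_sub_two_pow_le_one k⟩
  set x := (volume (Icc 0 1 ∩ Metric.ball (stripCentre t) (stripHalfWidth k))).toReal
  have hx : x ≤ ε := by
    refine ENNReal.toReal_le_of_le_ofReal hε.1 ((measure_mono inter_subset_right).trans_eq ?_)
    rw [Real.volume_ball, stripHalfWidth, mul_div_cancel₀ _ two_ne_zero]
  have hW : Wp p x ≤ ((2 : ℝ) ^ k) ^ (1 - p) :=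
    Wp_exp_one_sub (p := p) ((2 : ℝ) ^ k) ▸
      Wp_monotoneOn hp.le ⟨ENNReal.toReal_nonneg, hx.trans hε.2⟩ hε hx
  calc XpNorm p (fun s => transpositionExample p s t)
      = ENNReal.ofReal (stripHeight p k ^ p * Wp p x) ^ (1 / p) :=
        XpNorm_indicator_const (by linarith) _ (stripHeight_nonneg p k)
    _ ≤ ENNReal.ofReal (((2 : ℝ) ^ k) ^ (p - 1) * ((2 : ℝ) ^ k) ^ (1 - p)) ^ (1 / p) := by
        rw [stripHeight_rpow (by linarith)]
        gcongr
    _ = 1 := by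
        rw [← rpow_add (by positivity), sub_add_sub_cancel, sub_self, rpow_zero,
          ENNReal.ofReal_one, ENNReal.one_rpow]

lemma two_pow_le_exp (n : ℕ) : (2 : ℝ) ^ n ≤ exp n :=
  (pow_le_pow_left₀ zero_le_two (by linarith [add_one_le_exp (1 : ℝ)]) n).trans_eq (exp_one_pow n)

lemma exp_one_sub_two_pow_add_two_le (k : ℕ) :
    exp (1 - 2 ^ (k + 2)) ≤ exp (1 - 2 ^ k) / 2 ^ (k + 3) := by
  have hk : (k : ℝ) + 1 ≤ 2 ^ k := by exact_mod_cast Nat.lt_two_pow_self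
  rw [le_div_iff₀ (by positivity)]
  calc exp (1 - 2 ^ (k + 2)) * 2 ^ (k + 3) ≤ exp (1 - 2 ^ (k + 2)) * exp ↑(k + 3) := by
        gcongr; exact two_pow_le_exp _
    _ = exp (1 - 2 ^ (k + 2) + ↑(k + 3)) := (exp_add _ _).symm
    _ ≤ exp (1 - 2 ^ k) := by
        gcongr
        push_cast
        linarith [pow_add (2 : ℝ) k 2]

noncomputable def rowWindow (t : ℝ) (k : ℕ) : Set ℝ :=
  Ioo (1 - (6 - t + stripHalfWidth k) / 2 ^ (k + 3)) (1 - (6 - t - stripHalfWidth k) / 2 ^ (k + 3))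

lemma transpositionExample_eq_stripHeight {p t s : ℝ} (ht : t ∈ Icc 0 1) {k : ℕ}
    (hs : s ∈ rowWindow t k) :
    s ∈ Icc 0 1 ∧ transpositionExample p t s = stripHeight p k := by
  set h := stripHalfWidth k
  have hh : 0 < h ∧ h ≤ 1 / 2 := ⟨div_pos (exp_pos _) two_pos, by
    linarith [exp_one_sub_two_pow_le_one k, show h = exp (1 - 2 ^ k) / 2 from rfl]⟩
  have h2k : (0 : ℝ) < 2 ^ k := by positivity
  have hN : (2 : ℝ) ^ (k + 3) = 2 ^ k * 8 := by rw [pow_add]; norm_num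
  obtain ⟨hs₁, hs₂⟩ := hs
  rw [sub_lt_comm, lt_div_iff₀ (by positivity)] at hs₁
  rw [lt_sub_comm, div_lt_iff₀ (by positivity)] at hs₂
  have hs₀ : 0 < 1 - s := by nlinarith [ht.2]
  have hblock : blockIndex s = k := by
    apply blockIndex_eq
    · rw [le_inv_comm₀ h2k hs₀, inv_eq_one_div, le_div_iff₀ h2k]; nlinarith [ht.1]
    · rw [inv_lt_comm₀ hs₀ (by positivity), inv_eq_one_div, div_lt_iff₀ (by positivity),
        pow_succ]
      nlinarith [ht.2]
  refine ⟨⟨?_, by linarith⟩, ?_⟩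
  · nlinarith [ht.1, one_le_pow₀ (M₀ := ℝ) one_le_two (n := k)]
  rw [transpositionExample, hblock, indicator_of_mem]
  rw [Metric.mem_ball, Real.dist_eq, abs_sub_lt_iff, stripCentre, hblock]
  constructor <;> linarith

lemma rpow_le_XpLayer_row {p t lam : ℝ} (hp : 1 < p) (ht : t ∈ Icc 0 1) {k : ℕ}
    (hlam : lam < ((2 : ℝ) ^ k) ^ (p - 1)) :
    ENNReal.ofReal (((2 : ℝ) ^ (k + 2)) ^ (1 - p)) ≤
      XpLayer p (fun s => transpositionExample p t s) lam := by
  refine rpow_one_sub_le_XpLayer hp.le (A := rowWindow t k)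
    (fun s hs => (transpositionExample_eq_stripHeight (p := p) ht hs).1)
    (fun s hs => ?_) ?_
  · rw [(transpositionExample_eq_stripHeight ht hs).2, abs_of_nonneg (stripHeight_nonneg p k),
      stripHeight_rpow (by linarith)]
    exact hlam
  · rw [rowWindow, Real.volume_Ioo]
    refine ENNReal.ofReal_le_ofReal ((exp_one_sub_two_pow_add_two_le k).trans_eq ?_)
    rw [stripHalfWidth]
    ring

lemma XpNorm_row_eq_top {p t : ℝ} (hp : 1 < p) (ht : t ∈ Icc 0 1) :
    XpNorm p (fun s => transpositionExample p t s) = ⊤ := by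
  set a : ℕ → ℝ := fun k => ((2 : ℝ) ^ k) ^ (p - 1)
  have ha : Monotone a := fun i j hij =>
    rpow_le_rpow (by positivity) (pow_le_pow_right₀ one_le_two hij) (by linarith)
  set c := ((2 : ℝ) ^ (p - 1) - 1) * 8 ^ (1 - p)
  have hc : 0 < c := mul_pos (sub_pos.2 (one_lt_rpow one_lt_two (by linarith))) (by positivity)
  have hblock : ∀ k, ENNReal.ofReal c ≤
      ∫⁻ lam in Ioo (a k) (a (k + 1)), XpLayer p (fun s => transpositionExample p t s) lam := by
    intro k
    have hx : (0 : ℝ) < 2 ^ k := by positivity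
    have hc_eq : c = (a (k + 1) - a k) * ((2 : ℝ) ^ (k + 1 + 2)) ^ (1 - p) := by
      have hxx : ((2 : ℝ) ^ k) ^ (p - 1) * ((2 : ℝ) ^ k) ^ (1 - p) = 1 := by
        rw [← rpow_add hx, sub_add_sub_cancel, sub_self, rpow_zero]
      simp only [a, c, show (2 : ℝ) ^ (k + 1) = 2 ^ k * 2 by ring,
        show (2 : ℝ) ^ (k + 1 + 2) = 2 ^ k * 8 by ring, mul_rpow hx.le zero_le_two,
        mul_rpow hx.le (by norm_num : (0 : ℝ) ≤ 8)]
      linear_combination (-(8 ^ (1 - p) * (2 ^ (p - 1) - 1))) * hxx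
    calc ENNReal.ofReal c
        = ∫⁻ _ in Ioo (a k) (a (k + 1)), ENNReal.ofReal (((2 : ℝ) ^ (k + 1 + 2)) ^ (1 - p)) := by
          rw [setLIntegral_const, Real.volume_Ioo, ← ENNReal.ofReal_mul (by positivity), hc_eq,
            mul_comm]
      _ ≤ _ := setLIntegral_mono' measurableSet_Ioo fun _ hlam => rpow_le_XpLayer_row hp ht hlam.2
  rw [XpNorm_eq_XpLayer, setLIntegral_eq_top_of_le_Ioo ha
      (fun k => Ioo_subset_Ioi_self.trans (Ioi_subset_Ioi (by positivity))) (by positivity) hblock,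
    ENNReal.top_rpow_of_pos (by positivity)]

theorem transposition_not_bounded_Linfty_to_L1_general (p : ℝ) (hp : 1 < p)
    (C : ℝ) :
    ∃ f : ℝ → ℝ → ℝ, Measurable (Function.uncurry f) ∧
      (∀ᵐ t ∂mu01, XpNorm p (fun s => f s t) ≤ 1) ∧
      ENNReal.ofReal C < ∫⁻ t, XpNorm p (fun s => f t s) ∂mu01 := by
  refine ⟨transpositionExample p, measurable_transpositionExample p,
    ae_of_all _ (XpNorm_column_le_one hp), ?_⟩
  have hrows : ∫⁻ t, XpNorm p (fun s => transpositionExample p t s) ∂mu01 = ⊤ := by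
    rw [mu01, setLIntegral_congr_fun measurableSet_Icc fun t ht => XpNorm_row_eq_top hp ht]
    simp
  rw [hrows]
  exact ENNReal.ofReal_lt_top

/-- Example: for `1 < p < 2`, the transposition operator is NOT bounded from
`L^∞(X_p)` to `L^1(X_p)` on `[0,1]²`. -/
theorem transposition_not_bounded_Linfty_to_L1 (p : ℝ) (hp : 1 < p) (hp2 : p < 2)
    (C : ℝ) (hC : 0 < C) :
    ∃ f : ℝ → ℝ → ℝ, Measurable (Function.uncurry f) ∧
      (∀ᵐ t ∂mu01, XpNorm p (fun s => f s t) ≤ 1) ∧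
      ENNReal.ofReal C < ∫⁻ t, XpNorm p (fun s => f t s) ∂mu01 :=
  transposition_not_bounded_Linfty_to_L1_general p hp C
end

section
/- Let 1 ≤ p < q < ∞. There exists a constant C > 0 such that for every sequence (f_k)_{k∈ℕ} of measurable functions on [0,1], sup_{t>0} t · (#{k ∈ ℕ : ‖f_k‖_{L^p[0,1]} > t})^{1/q} ≤ C · ‖ x ↦ sup_{t>0} t · (#{k ∈ ℕ : |f_k(x)| > t})^{1/q} ‖_{L^p[0,1]}, where the cardinalities are taken in [0,∞] (counting measure on ℕ). (That is, the mixed-norm embedding L^p(ℓ^{q,∞}) ⊂ ℓ^{q,∞}(L^p) holds.) -/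
open MeasureTheory
open scoped ENNReal

/-!
For `p < q`, a family `(a_k)_{k ∈ F}` with `#F = n` and weak-`ℓ^q` quasinorm `W` satisfies
`∑_{k ∈ F} a_k^p ≤ C n^{1-p/q} W^p`: below the level `t = W n^{-1/q}` the sum is at most
`n t^p`, and above it the weak bound allows at most `n 2^{-jq}` values in `(2^j t, 2^{j+1} t]`,
a geometric series since `p < q`. If `‖f_k‖_p > t` for all `k ∈ F`, integrating this pointwise
estimate gives `n t^p ≤ ∑_{k ∈ F} ‖f_k‖_p^p ≤ C n^{1-p/q} ∫ W^p`, i.e.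
`t n^{1/q} ≤ (C ∫ W^p)^{1/p}`, and the weak-`ℓ^q` quasinorm is the supremum of these over `t`
and finite `F`.
-/

open Finset MeasureTheory ENNReal

theorem Real.rpow_le_add_sum_dyadic {x t p : ℝ} (ht : 0 < t) (hx : 0 ≤ x) (hp : 0 ≤ p)
    {N : ℕ} (hxN : x ≤ 2 ^ N * t) :
    x ^ p ≤ t ^ p + ∑ j ∈ range N, if 2 ^ j * t < x then (2 ^ (j + 1) * t) ^ p else 0 := by
  have hterm : ∀ j : ℕ, 0 ≤ if 2 ^ j * t < x then (2 ^ (j + 1) * t) ^ p else (0 : ℝ) := by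
    intro j; split_ifs <;> positivity
  induction N with
  | zero => simpa using Real.rpow_le_rpow hx (by simpa using hxN) hp
  | succ N ih =>
    rw [sum_range_succ, ← add_assoc]
    by_cases h : x ≤ 2 ^ N * t
    · exact (ih h).trans (le_add_of_nonneg_right (hterm N))
    · rw [if_pos (not_le.mp h)]
      have hrest : 0 ≤ t ^ p + ∑ j ∈ range N,
          if 2 ^ j * t < x then (2 ^ (j + 1) * t) ^ p else (0 : ℝ) :=
        add_nonneg (by positivity) (sum_nonneg fun j _ => hterm j)
      exact (Real.rpow_le_rpow hx hxN hp).trans (le_add_of_nonneg_left hrest)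

noncomputable def weakLqSumConst (p q : ℝ) : ℝ := 1 + 2 ^ p / (1 - 2 ^ (p - q))

lemma two_rpow_sub_lt_one {p q : ℝ} (hpq : p < q) : (2 : ℝ) ^ (p - q) < 1 :=
  Real.rpow_lt_one_of_one_lt_of_neg one_lt_two (by linarith)

lemma weakLqSumConst_pos {p q : ℝ} (hpq : p < q) : 0 < weakLqSumConst p q := by
  have : 0 < 1 - (2 : ℝ) ^ (p - q) := sub_pos.mpr (two_rpow_sub_lt_one hpq)
  unfold weakLqSumConst
  positivity

theorem Finset.sum_rpow_le_of_card_filter_dyadic_le {ι : Type*} (F : Finset ι) {a : ι → ℝ}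
    (ha : ∀ k, 0 ≤ a k) {p q t : ℝ} (hp : 0 < p) (hpq : p < q) (ht : 0 < t)
    (hcard : ∀ j : ℕ, (#{k ∈ F | 2 ^ j * t < a k} : ℝ) ≤ #F / ((2 : ℝ) ^ j) ^ q) :
    ∑ k ∈ F, a k ^ p ≤ weakLqSumConst p q * (#F * t ^ p) := by
  obtain ⟨N, hN⟩ := pow_unbounded_of_one_lt ((∑ k ∈ F, a k) / t) one_lt_two
  have haN : ∀ k ∈ F, a k ≤ 2 ^ N * t := fun k hk =>
    (single_le_sum (fun i _ => ha i) hk).trans ((div_lt_iff₀ ht).mp hN).le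
  set ρ : ℝ := 2 ^ (p - q)
  have hρ : ρ < 1 := two_rpow_sub_lt_one hpq
  have hterm : ∀ j : ℕ, (#{k ∈ F | 2 ^ j * t < a k} : ℝ) * (2 ^ (j + 1) * t) ^ p ≤
      #F * t ^ p * 2 ^ p * ρ ^ j := by
    intro j
    have h2j : (0 : ℝ) < 2 ^ j := by positivity
    calc (#{k ∈ F | 2 ^ j * t < a k} : ℝ) * (2 ^ (j + 1) * t) ^ p
        ≤ #F / ((2 : ℝ) ^ j) ^ q * (2 ^ (j + 1) * t) ^ p := by gcongr; exact hcard j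
      _ = #F * t ^ p * 2 ^ p * (((2 : ℝ) ^ j) ^ p / ((2 : ℝ) ^ j) ^ q) := by
        rw [pow_succ, mul_comm _ (2 : ℝ), mul_assoc, Real.mul_rpow (by norm_num) (by positivity),
          Real.mul_rpow h2j.le ht.le]
        ring
      _ = #F * t ^ p * 2 ^ p * ρ ^ j := by
        rw [← Real.rpow_sub h2j, Real.rpow_pow_comm (by norm_num)]
  calc ∑ k ∈ F, a k ^ p
      ≤ ∑ k ∈ F, (t ^ p + ∑ j ∈ range N,
          if 2 ^ j * t < a k then (2 ^ (j + 1) * t) ^ p else 0) :=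
        sum_le_sum fun k hk => Real.rpow_le_add_sum_dyadic ht (ha k) hp.le (haN k hk)
    _ = #F * t ^ p +
          ∑ j ∈ range N, (#{k ∈ F | 2 ^ j * t < a k} : ℝ) * (2 ^ (j + 1) * t) ^ p := by
      rw [sum_add_distrib, sum_comm, sum_const, nsmul_eq_mul]
      simp only [← sum_filter, sum_const, nsmul_eq_mul]
    _ ≤ #F * t ^ p + ∑ j ∈ range N, #F * t ^ p * 2 ^ p * ρ ^ j := by
      gcongr _ + ∑ j ∈ range N, ?_ with j
      exact hterm j
    _ ≤ #F * t ^ p + #F * t ^ p * 2 ^ p * (1 / (1 - ρ)) := by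
      rw [← mul_sum]
      gcongr
      simpa using geom_sum_Ico_le_of_lt_one (m := 0) (n := N) (by positivity) hρ
    _ = weakLqSumConst p q * (#F * t ^ p) := by
      unfold weakLqSumConst; ring

theorem Finset.sum_rpow_le_of_card_filter_le {ι : Type*} (F : Finset ι) {a : ι → ℝ}
    (ha : ∀ k, 0 ≤ a k) {p q W : ℝ} (hp : 0 < p) (hpq : p < q) (hW : 0 ≤ W)
    (hcard : ∀ s > 0, (#{k ∈ F | s < a k} : ℝ) ≤ (W / s) ^ q) :
    ∑ k ∈ F, a k ^ p ≤ weakLqSumConst p q * ((#F : ℝ) ^ (1 - p / q) * W ^ p) := by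
  have hq : 0 < q := hp.trans hpq
  have hC := weakLqSumConst_pos hpq
  rcases hW.eq_or_lt with rfl | hW
  · have hzero : ∀ k ∈ F, a k = 0 := by
      intro k hk
      by_contra hak
      have hs : 0 < a k / 2 := by have := (ha k).lt_of_ne' hak; positivity
      have hempty := hcard _ hs
      rw [zero_div, Real.zero_rpow hq.ne', Nat.cast_nonpos, card_eq_zero] at hempty
      exact filter_eq_empty_iff.mp hempty hk (by linarith)
    rw [sum_eq_zero fun k hk => by rw [hzero k hk, Real.zero_rpow hp.ne'],
      Real.zero_rpow hp.ne', mul_zero, mul_zero]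
  rcases F.eq_empty_or_nonempty with rfl | hF
  · rw [sum_empty]; exact mul_nonneg hC.le (by positivity)
  set n : ℝ := (#F : ℝ)
  have hn : 0 < n := by simpa [n] using hF.card_pos
  -- the level at which the weak bound `(W / t) ^ q` equals `n`
  set t := W / n ^ q⁻¹ with ht_def
  have ht : 0 < t := by positivity
  have hcard' : ∀ j : ℕ, (#{k ∈ F | 2 ^ j * t < a k} : ℝ) ≤ n / ((2 : ℝ) ^ j) ^ q := by
    intro j
    convert hcard (2 ^ j * t) (by positivity) using 1
    rw [ht_def, show W / (2 ^ j * (W / n ^ q⁻¹)) = n ^ q⁻¹ / 2 ^ j by field_simp,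
      Real.div_rpow (by positivity) (by positivity), Real.rpow_inv_rpow hn.le hq.ne']
  calc ∑ k ∈ F, a k ^ p ≤ weakLqSumConst p q * (n * t ^ p) :=
        sum_rpow_le_of_card_filter_dyadic_le F ha hp hpq ht hcard'
    _ = weakLqSumConst p q * (n ^ (1 - p / q) * W ^ p) := by
      rw [ht_def, Real.div_rpow hW.le (by positivity), ← Real.rpow_mul hn.le,
        Real.rpow_sub hn, Real.rpow_one, inv_mul_eq_div]
      ring

lemma ENNReal.mul_rpow_inv_le_iff {c x B : ℝ≥0∞} {q : ℝ} (hq : 0 < q) (hc₀ : c ≠ 0)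
    (hc : c ≠ ⊤) : c * x ^ q⁻¹ ≤ B ↔ x ≤ (B / c) ^ q := by
  rw [mul_comm, ← ENNReal.le_div_iff_mul_le (Or.inl hc₀) (Or.inl hc),
    ENNReal.rpow_inv_le_iff hq]

lemma MeasureTheory.Measure.count_le_of_forall_finset_subset {α : Type*} [MeasurableSpace α]
    [MeasurableSingletonClass α] {s : Set α} {B : ℝ≥0∞}
    (h : ∀ F : Finset α, ↑F ⊆ s → (#F : ℝ≥0∞) ≤ B) : Measure.count s ≤ B := by
  rcases s.finite_or_infinite with hs | hs
  · rw [Measure.count_apply_finite s hs]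
    exact h _ hs.coe_toFinset.subset
  · rw [Measure.count_apply_infinite hs, top_le_iff]
    by_contra hB
    obtain ⟨n, hn⟩ := ENNReal.exists_nat_gt hB
    obtain ⟨F, hFs, rfl⟩ := hs.exists_subset_card_eq n
    exact (h F hFs).not_gt hn

lemma count_lt_le_weakLqSeq_div_rpow {q : ℝ} (hq : 0 < q) (a : ℕ → ℝ≥0∞) {t : ℝ}
    (ht : 0 < t) :
    Measure.count {k | ENNReal.ofReal t < a k} ≤ (weakLqSeq q a / ENNReal.ofReal t) ^ q := by
  rw [← ENNReal.mul_rpow_inv_le_iff hq (by simpa using ht) ofReal_ne_top, ← one_div]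
  exact le_iSup_of_le (⟨t, ht⟩ : Set.Ioi (0 : ℝ)) le_rfl

lemma weakLqSeq_le_of_forall_finset {q : ℝ} (hq : 0 < q) {a : ℕ → ℝ≥0∞} {B : ℝ≥0∞}
    (h : ∀ t > 0, ∀ F : Finset ℕ, (∀ k ∈ F, ENNReal.ofReal t < a k) →
      ENNReal.ofReal t * (#F : ℝ≥0∞) ^ (1 / q) ≤ B) :
    weakLqSeq q a ≤ B := by
  refine iSup_le fun ⟨t, ht⟩ => ?_
  have ht₀ : ENNReal.ofReal t ≠ 0 := by simpa using ht
  rw [one_div, ENNReal.mul_rpow_inv_le_iff hq ht₀ ofReal_ne_top]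
  refine Measure.count_le_of_forall_finset_subset fun F hF => ?_
  rw [← ENNReal.mul_rpow_inv_le_iff hq ht₀ ofReal_ne_top, ← one_div]
  exact h t ht F fun k hk => hF hk

theorem sum_rpow_le_weakLqSeq {p q : ℝ} (hp : 0 < p) (hpq : p < q) {a : ℕ → ℝ≥0∞}
    (ha : ∀ k, a k ≠ ⊤) (F : Finset ℕ) :
    ∑ k ∈ F, a k ^ p ≤
      ENNReal.ofReal (weakLqSumConst p q) *
        ((#F : ℝ≥0∞) ^ (1 - p / q) * weakLqSeq q a ^ p) := by
  have hq : 0 < q := hp.trans hpq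
  have hC := weakLqSumConst_pos hpq
  set W := weakLqSeq q a
  rcases eq_or_ne W ⊤ with hW | hW
  · rcases F.eq_empty_or_nonempty with rfl | hF
    · simp
    have hF₀ : (#F : ℝ≥0∞) ^ (1 - p / q) ≠ 0 :=
      (rpow_pos (by simpa using hF.card_pos) (natCast_ne_top _)).ne'
    rw [hW, top_rpow_of_pos hp, mul_top hF₀, mul_top (by simpa using hC)]
    exact le_top
  have hcard : ∀ s > 0, (#{k ∈ F | s < (a k).toReal} : ℝ) ≤ (W.toReal / s) ^ q := by
    intro s hs
    have hsub : (#{k ∈ F | s < (a k).toReal} : ℝ≥0∞) ≤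
        Measure.count {k | ENNReal.ofReal s < a k} := by
      rw [← Measure.count_apply_finset]
      refine measure_mono fun k hk => ?_
      exact (ofReal_lt_iff_lt_toReal hs.le (ha k)).mpr (mem_filter.mp hk).2
    have hW' : Measure.count {k | ENNReal.ofReal s < a k} ≤ (W / ENNReal.ofReal s) ^ q :=
      count_lt_le_weakLqSeq_div_rpow hq a hs
    rw [← ofReal_toReal hW, ← ofReal_div_of_pos hs,
      ofReal_rpow_of_nonneg (by positivity) hq.le] at hW'
    simpa using toReal_le_of_le_ofReal (by positivity) (hsub.trans hW')
  have hreal :=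
    sum_rpow_le_of_card_filter_le F (fun k => toReal_nonneg) hp hpq toReal_nonneg hcard
  calc ∑ k ∈ F, a k ^ p = ENNReal.ofReal (∑ k ∈ F, (a k).toReal ^ p) := by
        rw [ofReal_sum_of_nonneg fun k _ => by positivity]
        refine sum_congr rfl fun k _ => ?_
        rw [← ofReal_rpow_of_nonneg toReal_nonneg hp.le, ofReal_toReal (ha k)]
    _ ≤ _ := ofReal_le_ofReal hreal
    _ = _ := by
      have hexp : 0 ≤ 1 - p / q := sub_nonneg.mpr ((div_le_one hq).mpr hpq.le)
      rw [ofReal_mul hC.le, ofReal_mul (by positivity),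
        ← ofReal_rpow_of_nonneg (by positivity) hp.le, ofReal_toReal hW,
        ← ofReal_rpow_of_nonneg (by positivity) hexp, ofReal_natCast]

section MixedNorm

variable {α : Type*} [MeasurableSpace α] (μ : Measure α) {p q : ℝ} {f : ℕ → α → ℝ}

theorem card_rpow_mul_rpow_le_lintegral_weakLqSeq (hp : 0 < p) (hpq : p < q)
    (hf : ∀ k, AEMeasurable (f k) μ) {t : ℝ} (F : Finset ℕ)
    (hF : ∀ k ∈ F, ENNReal.ofReal t < eLpNorm (f k) (ENNReal.ofReal p) μ) :
    (#F : ℝ≥0∞) ^ (p / q) * ENNReal.ofReal t ^ p ≤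
      ENNReal.ofReal (weakLqSumConst p q) *
        ∫⁻ x, weakLqSeq q (fun k => ENNReal.ofReal |f k x|) ^ p ∂μ := by
  set I := ∫⁻ x, weakLqSeq q (fun k => ENNReal.ofReal |f k x|) ^ p ∂μ
  set C := ENNReal.ofReal (weakLqSumConst p q)
  rcases F.eq_empty_or_nonempty with rfl | hF₀
  · simp [zero_rpow_of_pos (div_pos hp (hp.trans hpq))]
  have hn₀ : (#F : ℝ≥0∞) ≠ 0 := by simpa using hF₀.card_pos.ne'
  have hm₀ : (#F : ℝ≥0∞) ^ (1 - p / q) ≠ 0 :=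
    (rpow_pos (pos_iff_ne_zero.mpr hn₀) (natCast_ne_top _)).ne'
  have hm : (#F : ℝ≥0∞) ^ (1 - p / q) ≠ ⊤ :=
    rpow_ne_top_of_nonneg (sub_nonneg.mpr ((div_le_one (hp.trans hpq)).mpr hpq.le))
      (natCast_ne_top _)
  have hpow : ∀ k, eLpNorm (f k) (ENNReal.ofReal p) μ ^ p =
      ∫⁻ x, ENNReal.ofReal |f k x| ^ p ∂μ := by
    intro k
    have h := eLpNorm_nnreal_pow_eq_lintegral (f := f k) (μ := μ) (p := p.toNNReal)
      (by simpa using hp)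
    rw [Real.coe_toNNReal _ hp.le] at h
    simp_rw [Real.enorm_eq_ofReal_abs] at h
    exact h
  have hsum :
      (#F : ℝ≥0∞) * ENNReal.ofReal t ^ p ≤ C * ((#F : ℝ≥0∞) ^ (1 - p / q) * I) :=
    calc (#F : ℝ≥0∞) * ENNReal.ofReal t ^ p = ∑ k ∈ F, ENNReal.ofReal t ^ p := by
          rw [sum_const, nsmul_eq_mul]
      _ ≤ ∑ k ∈ F, ∫⁻ x, ENNReal.ofReal |f k x| ^ p ∂μ := sum_le_sum fun k hk => by
          rw [← hpow]; exact rpow_le_rpow (hF k hk).le hp.le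
      _ = ∫⁻ x, ∑ k ∈ F, ENNReal.ofReal |f k x| ^ p ∂μ :=
          (lintegral_finsetSum' F fun k _ => ((hf k).abs.ennreal_ofReal).pow_const p).symm
      _ ≤ ∫⁻ x, C * ((#F : ℝ≥0∞) ^ (1 - p / q) *
            weakLqSeq q (fun k => ENNReal.ofReal |f k x|) ^ p) ∂μ :=
          lintegral_mono fun x => sum_rpow_le_weakLqSeq hp hpq (fun k => ofReal_ne_top) F
      _ = C * ((#F : ℝ≥0∞) ^ (1 - p / q) * I) := by
          rw [lintegral_const_mul' _ _ ofReal_ne_top, lintegral_const_mul' _ _ hm]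
  have hsplit : (#F : ℝ≥0∞) ^ (p / q) * (#F : ℝ≥0∞) ^ (1 - p / q) = #F := by
    rw [← rpow_add _ _ hn₀ (natCast_ne_top _), add_sub_cancel, rpow_one]
  refine (ENNReal.mul_le_mul_iff_left hm₀ hm).mp ?_
  calc (#F : ℝ≥0∞) ^ (p / q) * ENNReal.ofReal t ^ p * (#F : ℝ≥0∞) ^ (1 - p / q)
      = #F * ENNReal.ofReal t ^ p := by rw [mul_right_comm, hsplit]
    _ ≤ C * ((#F : ℝ≥0∞) ^ (1 - p / q) * I) := hsum
    _ = C * I * (#F : ℝ≥0∞) ^ (1 - p / q) := by ring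

theorem weakLqSeq_eLpNorm_le (hp : 0 < p) (hpq : p < q) (hf : ∀ k, AEMeasurable (f k) μ) :
    weakLqSeq q (fun k => eLpNorm (f k) (ENNReal.ofReal p) μ) ≤
      ENNReal.ofReal (weakLqSumConst p q ^ (1 / p)) *
        (∫⁻ x, weakLqSeq q (fun k => ENNReal.ofReal |f k x|) ^ p ∂μ) ^ (1 / p) := by
  rw [← ofReal_rpow_of_pos (weakLqSumConst_pos hpq), ← mul_rpow_of_nonneg _ _ (by positivity)]
  refine weakLqSeq_le_of_forall_finset (hp.trans hpq) fun t _ F hF => ?_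
  rw [one_div p, le_rpow_inv_iff hp, mul_rpow_of_nonneg _ _ hp.le, ← rpow_mul, mul_comm,
    one_div_mul_eq_div]
  exact card_rpow_mul_rpow_le_lintegral_weakLqSeq μ hp hpq hf F hF

end MixedNorm

/-- Theorem: for `1 ≤ p < q < ∞`, the mixed-norm embedding
`L^p(ℓ^{q,∞}) ⊂ ℓ^{q,∞}(L^p)` holds (sequences of measurable functions). -/
theorem Lp_weak_lq_mixed_norm_embedding (p q : ℝ) (hp : 1 ≤ p) (hpq : p < q) :
    ∃ C : ℝ, 0 < C ∧ ∀ f : ℕ → ℝ → ℝ, (∀ k, Measurable (f k)) →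
      weakLqSeq q (fun k => eLpNorm (f k) (ENNReal.ofReal p) mu01) ≤
        ENNReal.ofReal C *
          (∫⁻ x, weakLqSeq q (fun k => ENNReal.ofReal |f k x|) ^ p ∂mu01) ^ (1 / p) :=
  ⟨_, Real.rpow_pos_of_pos (weakLqSumConst_pos hpq) _, fun _ hf =>
    weakLqSeq_eLpNorm_le mu01 (by linarith) hpq fun k => (hf k).aemeasurable⟩
end
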